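/- arXiv:2309.09389 — 7 statements merged into one kernel-verified Lean document; each statement's English description precedes it below -/
import Mathlib

section
/- Let $b\ge2$ and $\theta\in(0,1)$, and let $\{a_k(n)\}_{n\in\mathbb Z}$, $k\ge0$, be families of strictly positive reals with $a_k\in\ell^1(\mathbb Z)$ satisfying the recursion $a_{k+1}(n)=\theta^{n^2}\sum_{\ell_1+\dots+\ell_b=n}\prod_{i=1}^b a_k(\ell_i)$. Then for all $k\ge0$ and all $n\ge0$, $\frac{a_{k+1}(n+1)}{a_{k+1}(n)}\le b\,\theta^{(n+1)^2-n^2}\sup_{\ell\ge0}\frac{a_k(\ell+1)}{a_k(\ell)}$. -/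
/-!
Split a composition `ℓ₁ + ⋯ + ℓ_b = n + 1` (with `n ≥ 0`) at a part `ℓᵢ ≥ 1` and lower that part
by one. This sends the compositions of `n + 1` injectively into `Fin b ×` (compositions of `n`),
and costs at most a factor `C = sup_{ℓ ≥ 0} a(ℓ + 1) / a(ℓ)` in the product `∏ a(ℓⱼ)`. Hence the
`b`-fold convolution satisfies `a^{*b}(n + 1) ≤ b C a^{*b}(n)`, and the recursion multiplies this
by `θ^{(n+1)² - n²}`.
-/

open Finset

noncomputable def convPow (a : ℤ → ℝ) (b : ℕ) (n : ℤ) : ℝ :=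
  ∑' l : {l : Fin b → ℤ // ∑ i, l i = n}, ∏ i, a (l.1 i)

lemma hasSum_fintype_prod_snd {ι X : Type*} [Fintype ι] {f : X → ℝ} (hf0 : 0 ≤ f)
    (hf : Summable f) : HasSum (fun p : ι × X => f p.2) (Fintype.card ι * ∑' x, f x) := by
  have hsum : Summable fun p : ι × X => f p.2 :=
    (summable_prod_of_nonneg fun p => hf0 p.2).2 ⟨fun _ => hf, Summable.of_finite⟩
  convert hsum.hasSum using 1
  rw [hsum.tsum_prod' fun _ => hf]
  simp

lemma exists_one_le_of_sum_eq_succ {ι : Type*} {s : Finset ι} {l : ι → ℤ} {n : ℤ} (hn : 0 ≤ n)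
    (hl : ∑ i ∈ s, l i = n + 1) : ∃ i ∈ s, 1 ≤ l i := by
  have : ∑ i ∈ s, (0 : ℤ) < ∑ i ∈ s, l i := by rw [hl, sum_const_zero]; omega
  obtain ⟨i, hi, hpos⟩ := exists_lt_of_sum_lt this
  exact ⟨i, hi, hpos⟩

lemma prod_le_mul_prod_sub_single {ι : Type*} [Fintype ι] [DecidableEq ι] {a : ℤ → ℝ}
    (ha : ∀ m, 0 ≤ a m) {c : ℝ} {l : ι → ℤ} {i : ι} (hi : a (l i) ≤ c * a (l i - 1)) :
    ∏ j, a (l j) ≤ c * ∏ j, a ((l - Pi.single i 1 : ι → ℤ) j) := by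
  rw [← mul_prod_erase univ _ (mem_univ i), ← mul_prod_erase univ _ (mem_univ i)]
  have hrest :
      ∏ j ∈ univ.erase i, a ((l - Pi.single i 1 : ι → ℤ) j) = ∏ j ∈ univ.erase i, a (l j) :=
    prod_congr rfl fun j hj => by simp [ne_of_mem_erase hj]
  rw [hrest, ← mul_assoc]
  simp only [Pi.sub_apply, Pi.single_eq_same]
  exact mul_le_mul_of_nonneg_right hi (prod_nonneg fun j _ => ha _)

lemma convPow_succ_le {a : ℤ → ℝ} (ha : ∀ m, 0 ≤ a m) {c : ℝ} (hc : 0 ≤ c)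
    (hstep : ∀ ℓ : ℕ, a (ℓ + 1) ≤ c * a ℓ) (b : ℕ) {n : ℤ} (hn : 0 ≤ n)
    (hsum : Summable fun l : {l : Fin b → ℤ // ∑ i, l i = n} => ∏ i, a (l.1 i)) :
    convPow a b (n + 1) ≤ b * c * convPow a b n := by
  classical
  choose i hi using fun l : {l : Fin b → ℤ // ∑ i, l i = n + 1} =>
    exists_one_le_of_sum_eq_succ hn l.2
  let lower (l : {l : Fin b → ℤ // ∑ i, l i = n + 1}) :
      Fin b × {l : Fin b → ℤ // ∑ i, l i = n} :=
    (i l, ⟨l.1 - Pi.single (i l) 1, by simp [sum_sub_distrib, l.2]⟩)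
  have lower_injective : Function.Injective lower := by
    rintro l₁ l₂ h
    simp only [lower, Prod.mk.injEq, Subtype.mk.injEq] at h
    obtain ⟨hidx, hl⟩ := h
    rw [hidx] at hl
    exact Subtype.ext (sub_left_injective hl)
  let F (l : {l : Fin b → ℤ // ∑ i, l i = n}) : ℝ := c * ∏ j, a (l.1 j)
  have hF0 : 0 ≤ F := fun l => mul_nonneg hc (prod_nonneg fun j _ => ha _)
  have hF : HasSum (fun p : Fin b × _ => F p.2) (b * c * convPow a b n) := by
    convert hasSum_fintype_prod_snd (ι := Fin b) hF0 (hsum.mul_left c) using 1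
    rw [Fintype.card_fin, tsum_mul_left, convPow, mul_assoc]
  have hle (l : {l : Fin b → ℤ // ∑ i, l i = n + 1}) : ∏ j, a (l.1 j) ≤ F (lower l).2 := by
    obtain ⟨ℓ, hℓ⟩ := Int.eq_ofNat_of_zero_le (sub_nonneg.2 (hi l).2)
    refine prod_le_mul_prod_sub_single ha ?_
    rw [hℓ, show l.1 (i l) = ℓ + 1 by omega]
    exact hstep ℓ
  have hsum_succ : Summable fun l : {l : Fin b → ℤ // ∑ i, l i = n + 1} => ∏ j, a (l.1 j) :=
    (hF.summable.comp_injective lower_injective).of_nonneg_of_le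
      (fun _ => prod_nonneg fun j _ => ha _) hle
  exact hF.tsum_eq ▸ hsum_succ.tsum_le_tsum_of_inj lower lower_injective
    (fun p _ => hF0 p.2) hle hF.summable

lemma toNat_natCast_sq (n : ℕ) : ((n : ℤ) ^ 2).toNat = n ^ 2 := by
  exact_mod_cast Int.toNat_natCast (n ^ 2)

theorem stmt0_general (b : ℕ) (θ : ℝ) (hθ0 : 0 < θ)
    (a : ℕ → ℤ → ℝ) (hpos : ∀ k n, 0 < a k n)
    (hsum : ∀ (k : ℕ) (n : ℤ),
      Summable (fun l : {l : Fin b → ℤ // ∑ i, l i = n} => ∏ i, a k (l.1 i)))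
    (hrec : ∀ (k : ℕ) (n : ℤ),
      a (k + 1) n = θ ^ ((n ^ 2).toNat) *
        ∑' l : {l : Fin b → ℤ // ∑ i, l i = n}, ∏ i, a k (l.1 i))
    (C : ℕ → ℝ) (hC : ∀ k, IsLUB (Set.range fun ℓ : ℕ => a k (ℓ + 1) / a k ℓ) (C k)) :
    ∀ (k n : ℕ),
      a (k + 1) ((n : ℤ) + 1) / a (k + 1) (n : ℤ) ≤
        (b : ℝ) * θ ^ ((n + 1) ^ 2 - n ^ 2) * C k := by
  intro k n
  have hstep (ℓ : ℕ) : a k (ℓ + 1) ≤ C k * a k ℓ :=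
    (div_le_iff₀ (hpos k ℓ)).1 ((hC k).1 ⟨ℓ, rfl⟩)
  have hC0 : 0 ≤ C k := (div_pos (hpos k 1) (hpos k 0)).le.trans ((hC k).1 ⟨0, by simp⟩)
  have key := convPow_succ_le (fun m => (hpos k m).le) hC0 hstep b (Int.natCast_nonneg n)
    (hsum k n)
  have hsplit : θ ^ (n + 1) ^ 2 = θ ^ ((n + 1) ^ 2 - n ^ 2) * θ ^ n ^ 2 := by
    rw [← pow_add, Nat.sub_add_cancel (Nat.pow_le_pow_left n.le_succ 2)]
  rw [div_le_iff₀ (hpos _ _), hrec k, hrec k, ← Nat.cast_add_one, toNat_natCast_sq,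
    toNat_natCast_sq, hsplit]
  calc θ ^ ((n + 1) ^ 2 - n ^ 2) * θ ^ n ^ 2 * convPow (a k) b (n + 1)
      ≤ θ ^ ((n + 1) ^ 2 - n ^ 2) * θ ^ n ^ 2 * (b * C k * convPow (a k) b n) := by
        gcongr
    _ = b * θ ^ ((n + 1) ^ 2 - n ^ 2) * C k * (θ ^ n ^ 2 * convPow (a k) b n) := by
        ring

/-- One-step ratio bound for the Fourier-coefficient recursion of the
hierarchical DG-model: if `a (k+1) n = θ^(n²) * ∑_{ℓ₁+⋯+ℓ_b = n} ∏ᵢ a k ℓᵢ` with all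
coefficients positive and summable, then
`a (k+1) (n+1) / a (k+1) n ≤ b * θ^((n+1)² - n²) * sup_{ℓ ≥ 0} a k (ℓ+1) / a k ℓ`. -/
theorem stmt0 (b : ℕ) (hb : 2 ≤ b) (θ : ℝ) (hθ0 : 0 < θ) (hθ1 : θ < 1)
    (a : ℕ → ℤ → ℝ) (hpos : ∀ k n, 0 < a k n) (hl1 : ∀ k, Summable (a k))
    (hsum : ∀ (k : ℕ) (n : ℤ),
      Summable (fun l : {l : Fin b → ℤ // ∑ i, l i = n} => ∏ i, a k (l.1 i)))
    (hrec : ∀ (k : ℕ) (n : ℤ),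
      a (k + 1) n = θ ^ ((n ^ 2).toNat) *
        ∑' l : {l : Fin b → ℤ // ∑ i, l i = n}, ∏ i, a k (l.1 i))
    (C : ℕ → ℝ) (hC : ∀ k, IsLUB (Set.range fun ℓ : ℕ => a k (ℓ + 1) / a k ℓ) (C k)) :
    ∀ (k n : ℕ),
      a (k + 1) ((n : ℤ) + 1) / a (k + 1) (n : ℤ) ≤
        (b : ℝ) * θ ^ ((n + 1) ^ 2 - n ^ 2) * C k :=
  stmt0_general b θ hθ0 a hpos hsum hrec C hC
end

section
/- Let $b\ge2$, $\theta\in(0,1)$ with $b\theta\le1$, and let $\{a_k\}_{k\ge0}$ be as in the Fourier recursion $a_{k+1}(n)=\theta^{n^2}\sum_{\ell_1+\dots+\ell_b=n}\prod_i a_k(\ell_i)$ with all $a_k(n)>0$. Set $c_0:=\sup_{n\ge0}a_0(n+1)/a_0(n)$ and assume $c_0<\infty$. Then $\sup_{\ell\ge0}a_k(\ell+1)/a_k(\ell)\le (b\theta)^k c_0$ for all $k\ge0$, and consequently $a_k(n)\le\bigl[(b\theta)^{k-1}bc_0\bigr]^n\theta^{n^2}a_k(0)$ for all $n,k\ge1$.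 -/
lemma sumStep (b : ℕ) (hb : 1 ≤ b) (a : ℤ → ℝ) (hpos : ∀ n, 0 < a n)
    (hsum : ∀ n : ℤ, Summable (fun l : {l : Fin b → ℤ // ∑ i, l i = n} => ∏ i, a (l.1 i)))
    (c : ℝ) (hc : 0 ≤ c) (hr : ∀ m : ℤ, 0 ≤ m → a (m + 1) ≤ c * a m)
    (n : ℤ) (hn : 0 ≤ n) :
    (∑' l : {l : Fin b → ℤ // ∑ i, l i = n + 1}, ∏ i, a (l.1 i))
      ≤ (b : ℝ) * c * ∑' l : {l : Fin b → ℤ // ∑ i, l i = n}, ∏ i, a (l.1 i) := by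
  haveI : NeZero b := ⟨by omega⟩
  -- for each composition of n+1, pick an index with positive entry
  have hex : ∀ l : {l : Fin b → ℤ // ∑ i, l i = n + 1}, ∃ i, 1 ≤ l.1 i := by
    intro l
    by_contra h
    push_neg at h
    have : ∑ i, l.1 i ≤ ∑ _i : Fin b, (0:ℤ) := Finset.sum_le_sum (fun i _ => by
      have := h i; omega)
    simp [l.2] at this
    omega
  set X := {l : Fin b → ℤ // ∑ i, l i = n} with hX
  set Y := {l : Fin b → ℤ // ∑ i, l i = n + 1} with hY
  have hdec : ∀ (l : Y) (i : Fin b), ∑ j, Function.update l.1 i (l.1 i - 1) j = n := by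
    intro l i
    rw [Finset.sum_update_of_mem (Finset.mem_univ i), ← Finset.erase_eq]
    have := l.2
    have hsplit : ∑ j, l.1 j = l.1 i + ∑ j ∈ Finset.univ.erase i, l.1 j :=
      (Finset.add_sum_erase _ _ (Finset.mem_univ i)).symm
    omega
  let ι : Y → Fin b × X := fun l =>
    (Classical.choose (hex l),
      ⟨Function.update l.1 (Classical.choose (hex l))
        (l.1 (Classical.choose (hex l)) - 1), hdec l (Classical.choose (hex l))⟩)
  have hinj : Function.Injective ι := by
    intro l l' h
    have h1 : Classical.choose (hex l) = Classical.choose (hex l') := congrArg Prod.fst h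
    have h2 : Function.update l.1 (Classical.choose (hex l))
        (l.1 (Classical.choose (hex l)) - 1) = Function.update l'.1 (Classical.choose (hex l'))
        (l'.1 (Classical.choose (hex l')) - 1) := congrArg (fun p => (p.2 : X).1) h
    apply Subtype.ext
    funext j
    by_cases hcase : j = Classical.choose (hex l)
    · have hthis := congrFun h2 (Classical.choose (hex l))
      rw [h1] at hthis
      rw [Function.update_self, Function.update_self] at hthis
      rw [hcase, h1]
      omega
    · have hcase' : j ≠ Classical.choose (hex l') := h1 ▸ hcase
      have hthis := congrFun h2 j
      rwa [Function.update_of_ne hcase, Function.update_of_ne hcase'] at hthis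
  have hg : ∀ p : Fin b × X, 0 ≤ c * ∏ i, a (p.2.1 i) := fun p =>
    mul_nonneg hc (Finset.prod_nonneg fun i _ => (hpos _).le)
  have hfg : ∀ l : Y, (∏ i, a (l.1 i)) ≤ c * ∏ i, a ((ι l).2.1 i) := by
    intro l
    set i := Classical.choose (hex l) with hi
    have hi1 : 1 ≤ l.1 i := Classical.choose_spec (hex l)
    set m : Fin b → ℤ := Function.update l.1 i (l.1 i - 1) with hm
    have hmi : m i = l.1 i - 1 := Function.update_self _ _ _
    have hu : ∀ j ∈ Finset.univ.erase i, a (m j) = a (l.1 j) := by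
      intro j hj
      rw [hm, Function.update_of_ne (Finset.ne_of_mem_erase hj)]
    calc ∏ j, a (l.1 j) = a (l.1 i) * ∏ j ∈ Finset.univ.erase i, a (l.1 j) :=
          (Finset.mul_prod_erase _ _ (Finset.mem_univ i)).symm
      _ ≤ (c * a (l.1 i - 1)) * ∏ j ∈ Finset.univ.erase i, a (l.1 j) := by
          apply mul_le_mul_of_nonneg_right _ (Finset.prod_nonneg fun j _ => (hpos _).le)
          have := hr (l.1 i - 1) (by omega)
          simpa using this
      _ = c * (a (m i) * ∏ j ∈ Finset.univ.erase i, a (m j)) := by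
          rw [hmi, Finset.prod_congr rfl hu]; ring
      _ = c * ∏ j, a (m j) :=
          congrArg (c * ·) (Finset.mul_prod_erase _ (fun j => a (m j)) (Finset.mem_univ i))
  have hgsum : Summable (fun p : Fin b × X => c * ∏ i, a (p.2.1 i)) := by
    refine (summable_prod_of_nonneg hg).mpr ⟨fun x => ?_, Summable.of_finite⟩
    exact (hsum n).mul_left c
  have key := Summable.tsum_le_tsum_of_inj ι hinj (fun p _ => hg p) hfg (hsum (n + 1)) hgsum
  calc (∑' l : Y, ∏ i, a (l.1 i)) ≤ ∑' p : Fin b × X, c * ∏ i, a (p.2.1 i) := key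
    _ = ∑ i : Fin b, ∑' l : X, c * ∏ j, a (l.1 j) := by
        rw [Summable.tsum_prod' hgsum (fun x => (hsum n).mul_left c), tsum_fintype]
    _ = (b : ℝ) * c * ∑' l : X, ∏ i, a (l.1 i) := by
        rw [Finset.sum_const, Finset.card_univ, Fintype.card_fin, tsum_mul_left]
        push_cast; ring

/-- Iterated ratio bound in the subcritical regime `b θ ≤ 1`:
with `c₀ = sup_{n≥0} a₀(n+1)/a₀(n)` one has `sup_{ℓ≥0} a_k(ℓ+1)/a_k(ℓ) ≤ (bθ)^k c₀` and
consequently `a_k(n) ≤ [(bθ)^(k-1) b c₀]^n θ^(n²) a_k(0)` for `n, k ≥ 1`. -/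
theorem stmt2 (b : ℕ) (hb : 2 ≤ b) (θ : ℝ) (hθ0 : 0 < θ) (hθ1 : θ < 1)
    (hbθ : (b : ℝ) * θ ≤ 1)
    (a : ℕ → ℤ → ℝ) (hpos : ∀ k n, 0 < a k n) (hl1 : ∀ k, Summable (a k))
    (hsum : ∀ (k : ℕ) (n : ℤ),
      Summable (fun l : {l : Fin b → ℤ // ∑ i, l i = n} => ∏ i, a k (l.1 i)))
    (hrec : ∀ (k : ℕ) (n : ℤ),
      a (k + 1) n = θ ^ ((n ^ 2).toNat) *
        ∑' l : {l : Fin b → ℤ // ∑ i, l i = n}, ∏ i, a k (l.1 i))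
    (c0 : ℝ) (hc0 : IsLUB (Set.range fun n : ℕ => a 0 (n + 1) / a 0 n) c0) :
    (∀ (k ℓ : ℕ), a k ((ℓ : ℤ) + 1) / a k (ℓ : ℤ) ≤ ((b : ℝ) * θ) ^ k * c0) ∧
    (∀ (k n : ℕ), 1 ≤ k → 1 ≤ n →
      a k (n : ℤ) ≤ (((b : ℝ) * θ) ^ (k - 1) * b * c0) ^ n * θ ^ (n ^ 2) * a k 0) := by
  have hb1 : 1 ≤ b := by omega
  have hc0nn : 0 ≤ c0 := by
    have h1 := hc0.1 (Set.mem_range_self 0)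
    have h2 : 0 < a 0 ((0 : ℕ) + 1) / a 0 (0 : ℕ) := div_pos (hpos 0 _) (hpos 0 _)
    linarith
  have hub : ∀ n : ℕ, a 0 ((n : ℤ) + 1) / a 0 (n : ℤ) ≤ c0 := fun n =>
    hc0.1 (Set.mem_range_self n)
  have hbθnn : 0 ≤ (b : ℝ) * θ := by positivity
  -- the iterated ratio bound
  have P : ∀ k, ∀ m : ℤ, 0 ≤ m → a k (m + 1) ≤ ((b : ℝ) * θ) ^ k * c0 * a k m := by
    intro k
    induction k with
    | zero =>
      intro m hm
      lift m to ℕ using hm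
      have := (div_le_iff₀ (hpos 0 (m : ℤ))).mp (hub m)
      simpa using this
    | succ k ih =>
      intro m hm
      have hC : 0 ≤ ((b : ℝ) * θ) ^ k * c0 := mul_nonneg (pow_nonneg hbθnn k) hc0nn
      have hstep := sumStep b hb1 (a k) (hpos k) (hsum k) _ hC ih m hm
      rw [hrec k (m + 1), hrec k m]
      set Sm : ℝ := ∑' l : {l : Fin b → ℤ // ∑ i, l i = m}, ∏ i, a k (l.1 i) with hSm
      have hSmnn : 0 ≤ Sm := tsum_nonneg fun l => Finset.prod_nonneg fun i _ => (hpos _ _).le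
      have hA : (m ^ 2).toNat + 1 ≤ (((m + 1) ^ 2).toNat) := by
        have h1 : (m + 1) ^ 2 = m ^ 2 + (2 * m + 1) := by ring
        rw [h1, Int.toNat_add (by positivity) (by omega)]
        omega
      have hθpow : θ ^ (((m + 1) ^ 2).toNat) ≤ θ * θ ^ ((m ^ 2).toNat) := by
        calc θ ^ (((m + 1) ^ 2).toNat) ≤ θ ^ ((m ^ 2).toNat + 1) :=
              pow_le_pow_of_le_one hθ0.le hθ1.le hA
          _ = θ * θ ^ ((m ^ 2).toNat) := by rw [pow_succ]; ring
      calc θ ^ (((m + 1) ^ 2).toNat) *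
            ∑' l : {l : Fin b → ℤ // ∑ i, l i = m + 1}, ∏ i, a k (l.1 i)
          ≤ θ ^ (((m + 1) ^ 2).toNat) * ((b : ℝ) * (((b : ℝ) * θ) ^ k * c0) * Sm) :=
            mul_le_mul_of_nonneg_left hstep (pow_nonneg hθ0.le _)
        _ = ((b : ℝ) * (((b : ℝ) * θ) ^ k * c0)) * (θ ^ (((m + 1) ^ 2).toNat) * Sm) := by ring
        _ ≤ ((b : ℝ) * (((b : ℝ) * θ) ^ k * c0)) * ((θ * θ ^ ((m ^ 2).toNat)) * Sm) := by
            apply mul_le_mul_of_nonneg_left _ (by positivity)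
            exact mul_le_mul_of_nonneg_right hθpow hSmnn
        _ = ((b : ℝ) * θ) ^ (k + 1) * c0 * (θ ^ ((m ^ 2).toNat) * Sm) := by
            rw [pow_succ]; ring
  constructor
  · intro k ℓ
    rw [div_le_iff₀ (hpos k (ℓ : ℤ))]
    exact P k (ℓ : ℤ) (by positivity)
  · intro k n hk hn
    obtain ⟨j, rfl⟩ : ∃ j, k = j + 1 := ⟨k - 1, by omega⟩
    simp only [Nat.add_sub_cancel]
    set C : ℝ := ((b : ℝ) * θ) ^ j * c0 with hC
    have hCnn : 0 ≤ C := mul_nonneg (pow_nonneg hbθnn j) hc0nn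
    set Sf : ℤ → ℝ := fun z => ∑' l : {l : Fin b → ℤ // ∑ i, l i = z}, ∏ i, a j (l.1 i)
      with hSf
    have hSfnn : ∀ z, 0 ≤ Sf z := fun z =>
      tsum_nonneg fun l => Finset.prod_nonneg fun i _ => (hpos _ _).le
    have hSiter : ∀ N : ℕ, Sf (N : ℤ) ≤ ((b : ℝ) * C) ^ N * Sf 0 := by
      intro N
      induction N with
      | zero => simp
      | succ N ih =>
        have hcast : ((N + 1 : ℕ) : ℤ) = (N : ℤ) + 1 := by push_cast; ring
        rw [hcast]
        have hstep := sumStep b hb1 (a j) (hpos j) (hsum j) C hCnn (P j) (N : ℤ) (by positivity)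
        calc Sf ((N : ℤ) + 1) ≤ (b : ℝ) * C * Sf (N : ℤ) := hstep
          _ ≤ (b : ℝ) * C * (((b : ℝ) * C) ^ N * Sf 0) :=
              mul_le_mul_of_nonneg_left ih (by positivity)
          _ = ((b : ℝ) * C) ^ (N + 1) * Sf 0 := by rw [pow_succ]; ring
    have h0 : a (j + 1) 0 = Sf 0 := by
      have := hrec j 0
      simpa using this
    have hn2 : (((n : ℤ) ^ 2).toNat) = n ^ 2 := by
      rw [← Nat.cast_pow, Int.toNat_natCast]
    calc a (j + 1) (n : ℤ) = θ ^ (n ^ 2) * Sf (n : ℤ) := by rw [hrec j (n : ℤ), hn2]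
      _ ≤ θ ^ (n ^ 2) * (((b : ℝ) * C) ^ n * Sf 0) :=
          mul_le_mul_of_nonneg_left (hSiter n) (by positivity)
      _ = (((b : ℝ) * θ) ^ j * (b : ℝ) * c0) ^ n * θ ^ (n ^ 2) * Sf 0 := by
          rw [hC]; ring
      _ = (((b : ℝ) * θ) ^ j * (b : ℝ) * c0) ^ n * θ ^ (n ^ 2) * a (j + 1) 0 := by rw [h0]
end

section
/- Let $b\ge2$ and let $\{c_k\}_{k\ge0}$ be positive reals, and for each $k$ let $\alpha_k\in(0,1)$ be the unique solution of $\alpha_k=\bigl(1+\binom b2 c_k^2\alpha_k^2\bigr)^{-1}$. Suppose $c_{k+1}\le\frac{b^{-1}c_k}{1+\binom b2 c_k^2\alpha_k^2}+(1-b^{-1})c_k$ for all $k$, and that $\{c_k\}$ is non-increasing and $\{\alpha_k\}$ non-decreasing. Then there exists $\gamma>0$, explicitly $\gamma=c_0^2\frac{2\binom b2 b^{-1}\alpha_0^2}{[1+\binom b2 c_0^2]^2}$, such that $c_k\le c_0[1+\gamma k]^{-1/2}$ for all $k\ge0$. -/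
/-- Polynomial decay at criticality: under the recursive inequality
`c_{k+1} ≤ b⁻¹ c_k / (1 + C(b,2) c_k² α_k²) + (1 - b⁻¹) c_k` with the fixed-point
relation `α_k = (1 + C(b,2) c_k² α_k²)⁻¹`, there is an explicit `γ > 0` with
`c_k ≤ c_0 [1 + γ k]^{-1/2}` for all `k`. -/
theorem stmt4 (b : ℕ) (hb : 2 ≤ b) (c α : ℕ → ℝ)
    (hc : ∀ k, 0 < c k) (hα : ∀ k, α k ∈ Set.Ioo (0 : ℝ) 1)
    (hfix : ∀ k, α k = (1 + (b.choose 2 : ℝ) * (c k) ^ 2 * (α k) ^ 2)⁻¹)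
    (hrec : ∀ k, c (k + 1) ≤
      (b : ℝ)⁻¹ * c k / (1 + (b.choose 2 : ℝ) * (c k) ^ 2 * (α k) ^ 2) +
        (1 - (b : ℝ)⁻¹) * c k)
    (hcmono : ∀ k, c (k + 1) ≤ c k) (hαmono : ∀ k, α k ≤ α (k + 1)) :
    ∃ γ : ℝ,
      γ = (c 0) ^ 2 * (2 * (b.choose 2 : ℝ) * (b : ℝ)⁻¹ * (α 0) ^ 2 /
        (1 + (b.choose 2 : ℝ) * (c 0) ^ 2) ^ 2) ∧
      0 < γ ∧
      ∀ k : ℕ, c k ≤ c 0 / Real.sqrt (1 + γ * k) := by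
  have hBnat : 0 < b.choose 2 := Nat.choose_pos hb
  set B : ℝ := (b.choose 2 : ℝ) with hBdef
  have hB : (1:ℝ) ≤ B := by
    have h1 : 1 ≤ b.choose 2 := hBnat
    rw [hBdef]; exact_mod_cast h1
  have hb2 : (2:ℝ) ≤ (b:ℝ) := by exact_mod_cast hb
  have hbpos : (0:ℝ) < (b:ℝ)⁻¹ := by positivity
  have hbhalf : (b:ℝ)⁻¹ ≤ 1/2 := by
    rw [inv_le_comm₀ (by linarith) (by norm_num)]; linarith
  have hc0 := hc 0
  obtain ⟨hα00, hα01⟩ := hα 0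
  set E : ℝ := 1 + B * (c 0)^2 with hEdef
  have hE1 : (1:ℝ) ≤ E := by nlinarith [sq_nonneg (c 0)]
  have hEpos : (0:ℝ) < E := by linarith
  clear_value B E
  set γ : ℝ := (c 0) ^ 2 * (2 * B * (b : ℝ)⁻¹ * (α 0) ^ 2 / E ^ 2) with hγdef
  have hγpos : 0 < γ := by positivity
  refine ⟨γ, rfl, hγpos, ?_⟩
  clear_value γ
  -- lower bound on α 0 : α 0 * E ≥ 1
  have hfix0 : α 0 * (1 + B * (c 0)^2 * (α 0)^2) = 1 := by
    have hD0 : (0:ℝ) < 1 + B * (c 0)^2 * (α 0)^2 := by positivity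
    have h := inv_mul_cancel₀ (ne_of_gt hD0)
    rw [← hfix 0] at h; exact h
  have hα0E : 1 ≤ α 0 * E := by
    have key0 : α 0 * E = 1 + α 0 * B * (c 0)^2 * (1 - (α 0)^2) := by
      rw [hEdef]; linear_combination hfix0
    have hnn : 0 ≤ α 0 * B * (c 0)^2 * (1 - (α 0)^2) := by
      apply mul_nonneg
      · positivity
      · nlinarith
    linarith
  -- γ / c0² ≤ 2 b⁻¹ B (α k)³ for all k
  have hαmono' : ∀ k, α 0 ≤ α k := fun k =>
    (monotone_nat_of_le_succ hαmono) (Nat.zero_le k)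
  have hγdiv : ∀ k, γ / (c 0)^2 ≤ 2 * (b:ℝ)⁻¹ * B * (α k)^3 := by
    intro k
    have h1 : γ / (c 0)^2 = 2 * B * (b:ℝ)⁻¹ * (α 0)^2 / E^2 := by
      rw [hγdef]; field_simp
    rw [h1]
    have h2 : (α 0)^2 / E^2 ≤ (α k)^3 := by
      have hαk := hαmono' k
      calc (α 0)^2 / E^2 ≤ (α 0)^2 / E := by
            apply div_le_div_of_nonneg_left (by positivity) hEpos
            nlinarith
        _ ≤ (α 0)^3 := by
            rw [div_le_iff₀ hEpos]; nlinarith [sq_nonneg (α 0)]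
        _ ≤ (α k)^3 := by
            exact pow_le_pow_left₀ (le_of_lt hα00) hαk 3
    calc 2 * B * (b:ℝ)⁻¹ * (α 0)^2 / E^2
        = 2 * B * (b:ℝ)⁻¹ * ((α 0)^2 / E^2) := by ring
      _ ≤ 2 * B * (b:ℝ)⁻¹ * (α k)^3 := by
          apply mul_le_mul_of_nonneg_left h2 (by positivity)
      _ = 2 * (b:ℝ)⁻¹ * B * (α k)^3 := by ring
  -- key step
  have key : ∀ k, 1/(c k)^2 + γ/(c 0)^2 ≤ 1/(c (k+1))^2 := by
    intro k
    obtain ⟨hαk0, hαk1⟩ := hα k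
    have hck := hc k
    have hck1 := hc (k+1)
    have hD : (0:ℝ) < 1 + B * (c k)^2 * (α k)^2 := by positivity
    have hfixk : α k * (1 + B * (c k)^2 * (α k)^2) = 1 := by
      have h := inv_mul_cancel₀ (ne_of_gt hD)
      rw [← hfix k] at h; exact h
    have h1mα : 1 - α k = B * (c k)^2 * (α k)^3 := by linear_combination (-1 : ℝ) * hfixk
    set ε : ℝ := (b:ℝ)⁻¹ * (1 - α k) with hεdef
    clear_value ε
    have hε0 : 0 < ε := by
      rw [hεdef]; apply mul_pos hbpos; linarith
    have hε1 : ε ≤ 1/2 := by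
      have h : (b:ℝ)⁻¹ * (1 - α k) ≤ (1/2) * 1 := by
        apply mul_le_mul hbhalf (by linarith) (by linarith) (by norm_num)
      simpa [hεdef] using h
    have h1ε : 0 < 1 - ε := by linarith
    have hrec' : c (k+1) ≤ c k * (1 - ε) := by
      have h := hrec k
      rw [div_eq_mul_inv, ← hfix k] at h
      calc c (k+1) ≤ (b:ℝ)⁻¹ * c k * α k + (1 - (b:ℝ)⁻¹) * c k := h
        _ = c k * (1 - ε) := by rw [hεdef]; ring
    have hsq : (c (k+1))^2 ≤ (c k * (1-ε))^2 :=
      pow_le_pow_left₀ hck1.le hrec' 2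
    have hinv : 1/(c k * (1-ε))^2 ≤ 1/(c (k+1))^2 :=
      one_div_le_one_div_of_le (by positivity) hsq
    have h3 : 0 ≤ ε^2 * (3 - 2*ε) := mul_nonneg (sq_nonneg ε) (by linarith)
    have h2eq : (1 + 2*ε) * (1-ε)^2 = 1 - ε^2 * (3 - 2*ε) := by ring
    have h2 : (1 + 2*ε) * (1-ε)^2 ≤ 1 := by linarith [h2eq, h3]
    have hmid : (1 + 2*ε)/(c k)^2 ≤ 1/(c k * (1-ε))^2 := by
      rw [div_le_div_iff₀ (by positivity) (by positivity)]
      calc (1 + 2*ε) * (c k * (1-ε))^2 = ((1 + 2*ε) * (1-ε)^2) * (c k)^2 := by ring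
        _ ≤ 1 * (c k)^2 := mul_le_mul_of_nonneg_right h2 (sq_nonneg _)
    have hγε : γ/(c 0)^2 ≤ 2*ε/(c k)^2 := by
      have h : 2*ε/(c k)^2 = 2*(b:ℝ)⁻¹*B*(α k)^3 := by
        rw [hεdef, h1mα]; field_simp
      rw [h]; exact hγdiv k
    calc 1/(c k)^2 + γ/(c 0)^2 ≤ 1/(c k)^2 + 2*ε/(c k)^2 := by linarith
      _ = (1 + 2*ε)/(c k)^2 := by ring
      _ ≤ 1/(c k * (1-ε))^2 := hmid
      _ ≤ 1/(c (k+1))^2 := hinv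
  -- induction
  have main : ∀ k : ℕ, (1 + γ * k)/(c 0)^2 ≤ 1/(c k)^2 := by
    intro k
    induction k with
    | zero => simp
    | succ n ih =>
      have h := key n
      have : (1 + γ * n)/(c 0)^2 + γ/(c 0)^2 ≤ 1/(c (n+1))^2 := by linarith
      calc (1 + γ * (n+1 : ℕ))/(c 0)^2
          = (1 + γ * n)/(c 0)^2 + γ/(c 0)^2 := by push_cast; ring
        _ ≤ 1/(c (n+1))^2 := this
  -- conclude
  intro k
  have h := main k
  have hk1 : (0:ℝ) < 1 + γ * k := by positivity
  have hs : 0 < Real.sqrt (1 + γ * k) := Real.sqrt_pos.mpr hk1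
  rw [le_div_iff₀ hs]
  have hck := hc k
  have hsq2 : (c k * Real.sqrt (1 + γ * k))^2 ≤ (c 0)^2 := by
    have hss : (Real.sqrt (1 + γ * k))^2 = 1 + γ * k := Real.sq_sqrt (le_of_lt hk1)
    rw [div_le_div_iff₀ (by positivity) (by positivity)] at h
    calc (c k * Real.sqrt (1 + γ * k))^2
        = (1 + γ * k) * (c k)^2 := by rw [mul_pow, hss]; ring
      _ ≤ 1 * (c 0)^2 := h
      _ = (c 0)^2 := one_mul _
  calc c k * Real.sqrt (1 + γ * k)
      = Real.sqrt ((c k * Real.sqrt (1 + γ * k))^2) := by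
        rw [Real.sqrt_sq (by positivity)]
    _ ≤ Real.sqrt ((c 0)^2) := Real.sqrt_le_sqrt hsq2
    _ = c 0 := Real.sqrt_sq (le_of_lt hc0)
end

section
/- Let $\Delta_n$ be the hierarchical Laplacian on $\Lambda_n=\{1,\dots,b\}^n$, i.e., the operator $L_n$ with $\lambda_k=\sum_{j=0}^k b^j$. Then for all $x,y\in\Lambda_n$, the Green function satisfies $(\delta_x,-\Delta_n^{-1}\delta_y)=n+1-d(x,y)$, where $d(x,y)$ is the hierarchical distance (with $d(x,x)=0$). -/
/-- Hierarchical averaging operator `Q_k` (see Statement 5). -/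
noncomputable def Qop (b n : ℕ) (k : ℕ) (f : (Fin n → Fin b) → ℝ) : (Fin n → Fin b) → ℝ :=
  fun x =>
    if k ≤ n then
      ((b : ℝ) ^ k)⁻¹ *
        ∑ y ∈ Finset.univ.filter
          (fun y : Fin n → Fin b => ∀ i : Fin n, (i : ℕ) < n - k → y i = x i), f y
    else 0

/-- The hierarchical operator `L_n = -∑_{k=0}^n λ_k⁻¹ (Q_k - Q_{k+1})`. -/
noncomputable def Lop (b n : ℕ) (lam : ℕ → ℝ) (f : (Fin n → Fin b) → ℝ) :
    (Fin n → Fin b) → ℝ :=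
  fun x => -∑ k ∈ Finset.range (n + 1), (lam k)⁻¹ * (Qop b n k f x - Qop b n (k + 1) f x)

/-- The hierarchical Laplacian `Δ_n`: the operator `L_n` with `λ_k = ∑_{j=0}^k b^j`. -/
noncomputable def hDelta (b n : ℕ) (f : (Fin n → Fin b) → ℝ) : (Fin n → Fin b) → ℝ :=
  Lop b n (fun k => ∑ j ∈ Finset.range (k + 1), (b : ℝ) ^ j) f

/-- The hierarchical distance: smallest `k` such that `x` and `y` agree in the
first `n - k` coordinates (so `d(x,x) = 0`). -/
noncomputable def hdist (b n : ℕ) (x y : Fin n → Fin b) : ℕ :=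
  sInf {k : ℕ | ∀ i : Fin n, (i : ℕ) < n - k → x i = y i}

namespace S7
variable (b n : ℕ)

def ball (k : ℕ) (x : Fin n → Fin b) : Finset (Fin n → Fin b) :=
  Finset.univ.filter (fun y => ∀ i : Fin n, (i : ℕ) < n - k → y i = x i)

lemma mem_ball {k : ℕ} {x y : Fin n → Fin b} :
    y ∈ ball b n k x ↔ ∀ i : Fin n, (i : ℕ) < n - k → y i = x i := by
  simp [ball]

lemma Qop_eq {k : ℕ} (hk : k ≤ n) (f : (Fin n → Fin b) → ℝ) (x : Fin n → Fin b) :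
    Qop b n k f x = ((b : ℝ) ^ k)⁻¹ * ∑ y ∈ ball b n k x, f y := by
  rw [Qop, if_pos hk]; rfl

lemma card_ball {k : ℕ} (hk : k ≤ n) (x : Fin n → Fin b) :
    (ball b n k x).card = b ^ k := by
  have : (Finset.univ : Finset (Fin k → Fin b)).card = b ^ k := by simp
  rw [← this]
  apply Finset.card_nbij' (i := fun y => fun j : Fin k => y ⟨n - k + j, by omega⟩)
    (j := fun g => fun i : Fin n => if h : (i : ℕ) < n - k then x i
      else g ⟨(i : ℕ) - (n - k), by omega⟩)
  · intro y _; exact Finset.mem_univ _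
  · intro g _
    rw [Finset.mem_coe, mem_ball]; intro i hi; simp [dif_pos hi]
  · intro y hy
    rw [Finset.mem_coe, mem_ball] at hy
    funext i
    by_cases h : (i : ℕ) < n - k
    · simp only [dif_pos h]; exact (hy i h).symm
    · simp only [dif_neg h]; congr 1; apply Fin.ext; simp; omega
  · intro g _
    funext j
    have h : ¬ ((n - k + (j : ℕ)) < n - k) := by omega
    simp only [dif_neg h]; congr 1; apply Fin.ext; simp

lemma bR_pos (hb : 2 ≤ b) : (0:ℝ) < (b:ℝ) := by
  have : (0:ℕ) < b := by omega
  exact_mod_cast this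

lemma Qcomp (hb : 2 ≤ b) (k l : ℕ) (f : (Fin n → Fin b) → ℝ) :
    Qop b n k (Qop b n l f) = Qop b n (max k l) f := by
  have hbpow : ∀ m : ℕ, ((b:ℝ) ^ m) ≠ 0 := fun m => pow_ne_zero _ (ne_of_gt (bR_pos b hb))
  funext x
  by_cases hk : k ≤ n
  · by_cases hl : l ≤ n
    · rcases le_total k l with hkl | hlk
      · -- k ≤ l : Q_l f is constant on k-balls
        rw [max_eq_right hkl, Qop_eq b n hk]
        have hconst : ∀ y ∈ ball b n k x, Qop b n l f y = Qop b n l f x := by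
          intro y hy
          rw [mem_ball] at hy
          rw [Qop_eq b n hl, Qop_eq b n hl]
          congr 1
          apply Finset.sum_congr _ (fun _ _ => rfl)
          ext z
          rw [mem_ball, mem_ball]
          constructor <;> intro h i hi
          · rw [h i hi, hy i (by omega)]
          · rw [h i hi, hy i (by omega)]
        rw [Finset.sum_congr rfl hconst, Finset.sum_const, card_ball b n hk,
          nsmul_eq_mul]
        push_cast
        rw [← mul_assoc, inv_mul_cancel₀ (hbpow k), one_mul]
      · -- l ≤ k
        rw [max_eq_left hlk, Qop_eq b n hk, Qop_eq b n hk]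
        have hQ : ∀ y, Qop b n l f y = ((b:ℝ)^l)⁻¹ * ∑ z ∈ ball b n l y, f z :=
          fun y => Qop_eq b n hl f y
        rw [Finset.sum_congr rfl (fun y _ => hQ y), ← Finset.mul_sum]
        have hswap : ∑ y ∈ ball b n k x, ∑ z ∈ ball b n l y, f z
            = ∑ z ∈ ball b n k x, ∑ _y ∈ ball b n l z, f z := by
          apply Finset.sum_comm'
          intro y z
          simp only [mem_ball]
          constructor
          · rintro ⟨h1, h2⟩
            refine ⟨fun i hi => (h2 i hi).symm, fun i hi => ?_⟩
            rw [h2 i (by omega), h1 i hi]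
          · rintro ⟨g1, g2⟩
            refine ⟨fun i hi => ?_, fun i hi => (g1 i hi).symm⟩
            rw [g1 i (by omega), g2 i hi]
        rw [hswap]
        have : ∀ z ∈ ball b n k x, ∑ _y ∈ ball b n l z, f z = (b:ℝ)^l * f z := by
          intro z _
          rw [Finset.sum_const, card_ball b n hl, nsmul_eq_mul]
          push_cast; ring
        rw [Finset.sum_congr rfl this, ← Finset.mul_sum]
        have hfin : ((b:ℝ)^l)⁻¹ * ((b:ℝ)^l * ∑ z ∈ ball b n k x, f z)
            = ∑ z ∈ ball b n k x, f z := by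
          rw [← mul_assoc, inv_mul_cancel₀ (hbpow l), one_mul]
        rw [hfin]
    · -- l > n : Qop l f = 0, max k l > n
      have h1 : Qop b n l f = fun _ => 0 := by funext z; rw [Qop, if_neg hl]
      have h2 : ¬ (max k l ≤ n) := by omega
      rw [h1, Qop, if_pos hk, Qop, if_neg h2]
      simp
  · have h2 : ¬ (max k l ≤ n) := by omega
    rw [Qop, if_neg hk, Qop, if_neg h2]

lemma Qop_zero_of_gt {k : ℕ} (hk : n < k) (f : (Fin n → Fin b) → ℝ) (x : Fin n → Fin b) :
    Qop b n k f x = 0 := by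
  rw [Qop, if_neg (by omega)]

lemma Qop_zero (k : ℕ) (x : Fin n → Fin b) : Qop b n k (fun _ => 0) x = 0 := by
  rw [Qop]; split <;> simp

lemma Qop_add (k : ℕ) (f g : (Fin n → Fin b) → ℝ) (x : Fin n → Fin b) :
    Qop b n k (fun z => f z + g z) x = Qop b n k f x + Qop b n k g x := by
  rw [Qop, Qop, Qop]; split <;> simp [Finset.sum_add_distrib, mul_add]

lemma Qop_smul (k : ℕ) (c : ℝ) (f : (Fin n → Fin b) → ℝ) (x : Fin n → Fin b) :
    Qop b n k (fun z => c * f z) x = c * Qop b n k f x := by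
  rw [Qop, Qop]; split
  · rw [← Finset.mul_sum]; ring
  · simp

lemma Qop_neg (k : ℕ) (f : (Fin n → Fin b) → ℝ) (x : Fin n → Fin b) :
    Qop b n k (fun z => -(f z)) x = -Qop b n k f x := by
  have := Qop_smul b n k (-1) f x
  simp at this
  simpa using this

lemma Qop_sum {ι : Type*} (s : Finset ι) (F : ι → (Fin n → Fin b) → ℝ) (k : ℕ)
    (x : Fin n → Fin b) :
    Qop b n k (fun z => ∑ l ∈ s, F l z) x = ∑ l ∈ s, Qop b n k (F l) x := by
  classical
  induction s using Finset.induction_on with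
  | empty => simp [Qop_zero]
  | insert _ _ hnotmem ih =>
    rw [Finset.sum_insert hnotmem]
    rw [show (fun z => ∑ l ∈ insert _ _, F l z) = fun z => F _ z + ∑ l ∈ _, F l z from
      funext fun z => Finset.sum_insert hnotmem]
    rw [Qop_add, ih]

noncomputable def Gop (f : (Fin n → Fin b) → ℝ) : (Fin n → Fin b) → ℝ :=
  fun x => -∑ k ∈ Finset.range (n + 1), (b:ℝ) ^ k * Qop b n k f x

lemma lam_ne (hb : 2 ≤ b) (k : ℕ) : (∑ j ∈ Finset.range (k + 1), (b : ℝ) ^ j) ≠ 0 := by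
  have : (0:ℝ) < ∑ j ∈ Finset.range (k + 1), (b : ℝ) ^ j := by
    apply Finset.sum_pos
    · intro j _; exact pow_pos (bR_pos b hb) j
    · exact ⟨0, Finset.mem_range.2 (by omega)⟩
  exact ne_of_gt this

lemma Qop_id (f : (Fin n → Fin b) → ℝ) (x : Fin n → Fin b) : Qop b n 0 f x = f x := by
  rw [Qop_eq b n (Nat.zero_le n)]
  have : ball b n 0 x = {x} := by
    ext z
    rw [mem_ball]
    simp only [Finset.mem_singleton]
    constructor
    · intro h; funext i; exact h i (by omega)
    · intro h i _; rw [h]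
  rw [this]
  simp

lemma Qop_Gop (hb : 2 ≤ b) (k : ℕ) (f : (Fin n → Fin b) → ℝ) (x : Fin n → Fin b) :
    Qop b n k (Gop b n f) x
      = -∑ l ∈ Finset.range (n + 1), (b:ℝ) ^ l * Qop b n (max k l) f x := by
  unfold Gop
  rw [show (fun x => -∑ l ∈ Finset.range (n + 1), (b:ℝ) ^ l * Qop b n l f x)
      = (fun x => -(∑ l ∈ Finset.range (n + 1), (b:ℝ) ^ l * Qop b n l f x)) from rfl,
    Qop_neg, Qop_sum]
  congr 1
  apply Finset.sum_congr rfl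
  intro l _
  rw [Qop_smul, ← Qcomp b n hb k l f]

lemma delta_Gop (hb : 2 ≤ b) (f : (Fin n → Fin b) → ℝ) :
    hDelta b n (Gop b n f) = f := by
  funext x
  rw [hDelta, Lop]
  have key : ∀ k ∈ Finset.range (n + 1),
      (∑ j ∈ Finset.range (k + 1), (b : ℝ) ^ j)⁻¹ *
        (Qop b n k (Gop b n f) x - Qop b n (k + 1) (Gop b n f) x)
      = -(Qop b n k f x - Qop b n (k + 1) f x) := by
    intro k hk
    rw [Finset.mem_range] at hk
    rw [Qop_Gop b n hb, Qop_Gop b n hb]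
    have step1 : ∀ l ∈ Finset.range (n + 1),
        (b:ℝ) ^ l * Qop b n (max k l) f x - (b:ℝ) ^ l * Qop b n (max (k+1) l) f x
        = if l ≤ k then (b:ℝ) ^ l * (Qop b n k f x - Qop b n (k + 1) f x) else 0 := by
      intro l _
      by_cases h : l ≤ k
      · rw [if_pos h, max_eq_left (by omega), max_eq_left (by omega)]; ring
      · rw [if_neg h, max_eq_right (by omega), max_eq_right (by omega)]; ring
    have hfil : Finset.filter (fun l => l ≤ k) (Finset.range (n+1)) = Finset.range (k+1) := by
      ext l; simp [Finset.mem_range, Finset.mem_filter]; omega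
    have : -∑ l ∈ Finset.range (n + 1), (b:ℝ) ^ l * Qop b n (max k l) f x -
        -∑ l ∈ Finset.range (n + 1), (b:ℝ) ^ l * Qop b n (max (k+1) l) f x
        = -((∑ j ∈ Finset.range (k + 1), (b : ℝ) ^ j) *
            (Qop b n k f x - Qop b n (k + 1) f x)) := by
      rw [neg_sub_neg, ← neg_sub, ← Finset.sum_sub_distrib, Finset.sum_congr rfl step1,
        ← Finset.sum_filter, hfil, ← Finset.sum_mul]
    rw [this, mul_neg, ← mul_assoc, inv_mul_cancel₀ (lam_ne b hb k), one_mul]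
  rw [Finset.sum_congr rfl key]
  simp only [Finset.sum_neg_distrib, neg_neg]
  rw [Finset.sum_range_sub' (f := fun k => Qop b n k f x), Qop_id,
    Qop_zero_of_gt b n (by omega), sub_zero]
noncomputable def DeltaLM : ((Fin n → Fin b) → ℝ) →ₗ[ℝ] ((Fin n → Fin b) → ℝ) where
  toFun := hDelta b n
  map_add' f g := by
    funext x
    simp only [hDelta, Lop, Pi.add_apply]
    rw [← neg_add, ← Finset.sum_add_distrib]
    congr 1
    apply Finset.sum_congr rfl
    intro k _
    rw [show (f + g) = fun z => f z + g z from rfl, Qop_add, Qop_add]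
    ring
  map_smul' c f := by
    funext x
    simp only [hDelta, Lop, Pi.smul_apply, smul_eq_mul, RingHom.id_apply]
    rw [mul_neg, Finset.mul_sum]
    congr 1
    apply Finset.sum_congr rfl
    intro k _
    rw [show (c • f) = fun z => c * f z from rfl, Qop_smul, Qop_smul]
    ring

lemma delta_inj (hb : 2 ≤ b) : Function.Injective (hDelta b n) := by
  have hsurj : Function.Surjective (DeltaLM b n) :=
    fun f => ⟨Gop b n f, delta_Gop b n hb f⟩
  exact (LinearMap.injective_iff_surjective.2 hsurj)

lemma hdist_spec (x y : Fin n → Fin b) :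
    ∀ i : Fin n, (i : ℕ) < n - hdist b n x y → x i = y i := by
  have hne : {k : ℕ | ∀ i : Fin n, (i : ℕ) < n - k → x i = y i}.Nonempty :=
    ⟨n, fun i hi => absurd hi (by omega)⟩
  exact Nat.sInf_mem hne

lemma hdist_le_n (x y : Fin n → Fin b) : hdist b n x y ≤ n :=
  Nat.sInf_le (fun i hi => absurd hi (by omega))

lemma hdist_le_iff (x y : Fin n → Fin b) (k : ℕ) :
    hdist b n x y ≤ k ↔ ∀ i : Fin n, (i : ℕ) < n - k → x i = y i := by
  constructor
  · intro h i hi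
    exact hdist_spec b n x y i (by omega)
  · intro h
    exact Nat.sInf_le h

lemma Qop_delta (hb : 2 ≤ b) {k : ℕ} (hk : k ≤ n) (x y : Fin n → Fin b) :
    Qop b n k (fun z => if z = y then (1:ℝ) else 0) x
      = ((b:ℝ) ^ k)⁻¹ * (if hdist b n x y ≤ k then 1 else 0) := by
  rw [Qop_eq b n hk]
  congr 1
  rw [Finset.sum_ite_eq' (ball b n k x) y (fun _ => (1:ℝ))]
  have hmem : y ∈ ball b n k x ↔ hdist b n x y ≤ k := by
    rw [mem_ball, hdist_le_iff]
    constructor <;> intro h i hi <;> exact (h i hi).symm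
  by_cases h : hdist b n x y ≤ k
  · rw [if_pos (hmem.2 h), if_pos h]
  · rw [if_neg (fun hy => h (hmem.1 hy)), if_neg h]

lemma Gop_delta (hb : 2 ≤ b) (x y : Fin n → Fin b) :
    Gop b n (fun z => if z = y then (1:ℝ) else 0) x
      = -((n:ℝ) + 1 - hdist b n x y) := by
  unfold Gop
  have step : ∀ k ∈ Finset.range (n + 1),
      (b:ℝ) ^ k * Qop b n k (fun z => if z = y then (1:ℝ) else 0) x
      = if hdist b n x y ≤ k then 1 else 0 := by
    intro k hk
    rw [Finset.mem_range] at hk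
    rw [Qop_delta b n hb (by omega), ← mul_assoc,
      mul_inv_cancel₀ (pow_ne_zero _ (ne_of_gt (bR_pos b hb))), one_mul]
  rw [Finset.sum_congr rfl step, Finset.sum_boole]
  have hfil : Finset.filter (fun k => hdist b n x y ≤ k) (Finset.range (n+1))
      = Finset.Ico (hdist b n x y) (n+1) := by
    ext k; simp [Finset.mem_Ico, Finset.mem_filter, Finset.mem_range]; omega
  rw [hfil, Nat.card_Ico]
  have hd : hdist b n x y ≤ n + 1 := by have := hdist_le_n b n x y; omega
  rw [Nat.cast_sub hd]
  push_cast
  ring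
end S7

/-- The Green function of the hierarchical Laplacian satisfies
`(δ_x, -Δ_n⁻¹ δ_y) = n + 1 - d(x,y)`: the Dirac mass `δ_y` has a preimage under `Δ_n`,
and any such preimage `g` obeys `∑_z δ_x(z) (-g(z)) = n + 1 - d(x,y)`. -/
theorem stmt7 (b n : ℕ) (hb : 2 ≤ b) (x y : Fin n → Fin b) :
    (∃ g : (Fin n → Fin b) → ℝ, hDelta b n g = fun z => if z = y then 1 else 0) ∧
    (∀ g : (Fin n → Fin b) → ℝ, (hDelta b n g = fun z => if z = y then 1 else 0) →
      ∑ z, (if z = x then (1 : ℝ) else 0) * (-(g z)) = (n : ℝ) + 1 - hdist b n x y) := by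
  constructor
  · exact ⟨S7.Gop b n (fun z => if z = y then 1 else 0), S7.delta_Gop b n hb _⟩
  · intro g hg
    have hg0 : hDelta b n (S7.Gop b n (fun z => if z = y then 1 else 0))
        = fun z => if z = y then 1 else 0 := S7.delta_Gop b n hb _
    have hgeq : g = S7.Gop b n (fun z => if z = y then 1 else 0) :=
      S7.delta_inj b n hb (hg.trans hg0.symm)
    subst hgeq
    rw [show ∀ s : Finset (Fin n → Fin b), ∀ h : _ → ℝ,
        (∑ z ∈ s, (if z = x then (1:ℝ) else 0) * h z) = ∑ z ∈ s, if z = x then h z else 0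
      from fun s h => Finset.sum_congr rfl (fun z _ => by split <;> simp)]
    rw [Finset.sum_ite_eq' Finset.univ x, if_pos (Finset.mem_univ x),
      S7.Gop_delta b n hb x y]
    ring
end

section
/- In the setting of the monotone coupling map $h=G^{-1}\circ F$ for densities $f_1,f_2>0$ relative to $\mathcal N(0,\sigma^2)$ with $1/f_1$ and $f_2$ bounded: for all $t>0$, $h(t)\le t+\frac{2\sigma^2}{t}\log(\|f_2\|_\infty\|1/f_1\|_\infty)$, and for all $t<0$, $h(t)\ge t-\frac{2\sigma^2}{|t|}\log(\|f_2\|_\infty\|1/f_1\|_\infty)$. -/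
/-!
The Gaussian density satisfies `g (x + d) ≤ exp (-t d / σ²) g x` whenever `d (x - t) ≥ 0`, so
shifting a tail of `N(0, σ²)` outwards by `d` shrinks its mass by the factor `exp (-t d / σ²)`.
With `d = 2σ² log (A₂ B₁) / |t|` this factor is `(A₂ B₁)⁻²`, which beats the density ratio
`f₂ / f₁ ≤ A₂ B₁`: for `t > 0` the `f₂`-mass beyond `t + d` is at most the `f₁`-mass beyond `t`,
so `F t ≤ G (t + d)`; for `t < 0` the `f₂`-mass below any `s < t - d` is less than the `f₁`-mass
below `t`, so `G s < F t`.
-/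

open MeasureTheory ProbabilityTheory Set Real
open scoped NNReal

/-- The junk value `sInf s = 0` for `s` not bounded below makes this hold without boundedness. -/
lemma Real.sInf_le_of_mem_of_nonneg {s : Set ℝ} {a : ℝ} (ha : a ∈ s) (ha₀ : 0 ≤ a) :
    sInf s ≤ a := by
  by_cases hs : BddBelow s
  · exact csInf_le hs ha
  · rwa [Real.sInf_of_not_bddBelow hs]

lemma mul_exp_neg_two_mul_log_mul_le {A B : ℝ} (hA : 0 < A) (hB : 0 < B) (hAB : 1 ≤ A * B) :
    A * exp (-(2 * log (A * B))) ≤ B⁻¹ := by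
  have hL : 0 ≤ log (A * B) := log_nonneg hAB
  calc A * exp (-(2 * log (A * B))) ≤ A * exp (-log (A * B)) := by gcongr; linarith
    _ = B⁻¹ := by rw [exp_neg, exp_log (by positivity)]; field_simp

section GaussianTail

variable {v : ℝ≥0}

lemma gaussianPDFReal_add_le {t d x : ℝ} (h : 0 ≤ d * (x - t)) :
    gaussianPDFReal 0 v (x + d) ≤ exp (-(t * d) / v) * gaussianPDFReal 0 v x := by
  simp only [gaussianPDFReal, sub_zero]
  rw [mul_left_comm, ← exp_add]
  gcongr
  have hgap : -(t * d) / v + -x ^ 2 / (2 * v) - -(x + d) ^ 2 / (2 * v)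
      = (2 * (d * (x - t)) + d ^ 2) / (2 * v) := by ring
  have : 0 ≤ (2 * (d * (x - t)) + d ^ 2) / (2 * (v : ℝ)) := by positivity
  linarith

lemma gaussianReal_real_eq_integral (hv : v ≠ 0) (s : Set ℝ) :
    (gaussianReal 0 v).real s = ∫ x in s, gaussianPDFReal 0 v x := by
  rw [measureReal_def, gaussianReal_apply_eq_integral 0 hv,
    ENNReal.toReal_ofReal (integral_nonneg (gaussianPDFReal_nonneg 0 v))]

lemma gaussianReal_real_image_add_le (hv : v ≠ 0) {s : Set ℝ} (hs : MeasurableSet s) {t d : ℝ}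
    (h : ∀ x ∈ s, 0 ≤ d * (x - t)) :
    (gaussianReal 0 v).real ((· + d) '' s) ≤ exp (-(t * d) / v) * (gaussianReal 0 v).real s := by
  rw [gaussianReal_real_eq_integral hv, gaussianReal_real_eq_integral hv,
    (measurePreserving_add_right volume d).setIntegral_image_emb (measurableEmbedding_addRight d),
    ← integral_const_mul]
  exact setIntegral_mono_on ((integrable_gaussianPDFReal 0 v).comp_add_right d).integrableOn
    ((integrable_gaussianPDFReal 0 v).integrableOn.const_mul _) hs
    fun x hx => gaussianPDFReal_add_le (h x hx)

lemma gaussianReal_real_Ioi_add_le (hv : v ≠ 0) (t : ℝ) {d : ℝ} (hd : 0 ≤ d) :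
    (gaussianReal 0 v).real (Ioi (t + d))
      ≤ exp (-(t * d) / v) * (gaussianReal 0 v).real (Ioi t) := by
  simpa only [image_add_const_Ioi] using gaussianReal_real_image_add_le hv measurableSet_Ioi
    fun x hx => mul_nonneg hd (sub_nonneg.2 hx.le)

lemma gaussianReal_real_Iic_sub_le (hv : v ≠ 0) (t : ℝ) {d : ℝ} (hd : 0 ≤ d) :
    (gaussianReal 0 v).real (Iic (t - d))
      ≤ exp (t * d / v) * (gaussianReal 0 v).real (Iic t) := by
  have := gaussianReal_real_image_add_le hv measurableSet_Iic (t := t) (d := -d)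
    fun x hx => mul_nonneg_of_nonpos_of_nonpos (neg_nonpos.2 hd) (sub_nonpos.2 hx)
  rwa [image_add_const_Iic, ← sub_eq_add_neg, mul_neg, neg_neg] at this

lemma gaussianReal_real_Iic_lt (hv : v ≠ 0) {t d s : ℝ} (ht : t < 0) (hd : 0 ≤ d)
    (hs : s < t - d) :
    (gaussianReal 0 v).real (Iic s) < exp (t * d / v) * (gaussianReal 0 v).real (Iic t) := by
  have hpos : 0 < (gaussianReal 0 v).real (Iic t) :=
    ENNReal.toReal_pos ((gaussianReal_absolutelyContinuous' 0 hv).pos_mono (by simp)).ne'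
      (measure_ne_top _ _)
  have hv₀ : (0 : ℝ) < v := by positivity
  calc (gaussianReal 0 v).real (Iic s) = (gaussianReal 0 v).real (Iic (t - (t - s))) := by
        rw [sub_sub_cancel]
    _ ≤ exp (t * (t - s) / v) * (gaussianReal 0 v).real (Iic t) :=
        gaussianReal_real_Iic_sub_le hv t (by linarith)
    _ < exp (t * d / v) * (gaussianReal 0 v).real (Iic t) :=
        mul_lt_mul_of_pos_right (exp_lt_exp.2 (div_lt_div_of_pos_right (by nlinarith) hv₀)) hpos

variable {A B : ℝ}

lemma mul_gaussianReal_real_Ioi_add_le (hv : v ≠ 0) (hA : 0 < A) (hB : 0 < B) (hAB : 1 ≤ A * B)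
    {t : ℝ} (ht : 0 < t) :
    A * (gaussianReal 0 v).real (Ioi (t + 2 * v / t * log (A * B)))
      ≤ B⁻¹ * (gaussianReal 0 v).real (Ioi t) := by
  have hL : 0 ≤ log (A * B) := log_nonneg hAB
  have hexp : -(t * (2 * v / t * log (A * B))) / v = -(2 * log (A * B)) := by
    have : (v : ℝ) ≠ 0 := by positivity
    field_simp
  calc A * (gaussianReal 0 v).real (Ioi (t + 2 * v / t * log (A * B)))
      ≤ A * (exp (-(2 * log (A * B))) * (gaussianReal 0 v).real (Ioi t)) := by
        rw [← hexp]; gcongr; exact gaussianReal_real_Ioi_add_le hv t (by positivity)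
    _ ≤ B⁻¹ * (gaussianReal 0 v).real (Ioi t) := by
        rw [← mul_assoc]; gcongr; exact mul_exp_neg_two_mul_log_mul_le hA hB hAB

lemma mul_gaussianReal_real_Iic_lt (hv : v ≠ 0) (hA : 0 < A) (hB : 0 < B) (hAB : 1 ≤ A * B)
    {t s : ℝ} (ht : t < 0) (hs : s < t - 2 * v / |t| * log (A * B)) :
    A * (gaussianReal 0 v).real (Iic s) < B⁻¹ * (gaussianReal 0 v).real (Iic t) := by
  have hL : 0 ≤ log (A * B) := log_nonneg hAB
  have hexp : t * (2 * v / |t| * log (A * B)) / v = -(2 * log (A * B)) := by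
    have : (v : ℝ) ≠ 0 := by positivity
    rw [abs_of_neg ht]; field_simp [ht.ne]
  calc A * (gaussianReal 0 v).real (Iic s)
      < A * (exp (-(2 * log (A * B))) * (gaussianReal 0 v).real (Iic t)) := by
        rw [← hexp]; gcongr; exact gaussianReal_real_Iic_lt hv ht (by positivity) hs
    _ ≤ B⁻¹ * (gaussianReal 0 v).real (Iic t) := by
        rw [← mul_assoc]; gcongr; exact mul_exp_neg_two_mul_log_mul_le hA hB hAB

end GaussianTail

section Coupling

variable {X : Type*} [MeasurableSpace X] {μ : Measure X} {f : X → ℝ} {a : ℝ}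

lemma setIntegral_le_mul_measureReal_of_le [IsFiniteMeasure μ] {s : Set X} (hs : MeasurableSet s)
    (hf : IntegrableOn f s μ) (ha : ∀ x, f x ≤ a) : ∫ x in s, f x ∂μ ≤ a * μ.real s := by
  calc ∫ x in s, f x ∂μ ≤ ∫ _ in s, a ∂μ :=
        setIntegral_mono_on hf (integrableOn_const (measure_ne_top _ _)) hs fun x _ => ha x
    _ = a * μ.real s := by rw [setIntegral_const, smul_eq_mul, mul_comm]

lemma le_of_forall_le_of_integral_eq [IsProbabilityMeasure μ] {g : X → ℝ} {b : ℝ}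
    (hf : Integrable f μ) (hg : Integrable g μ) (h_eq : ∫ x, f x ∂μ = ∫ x, g x ∂μ)
    (hb : ∀ x, b ≤ f x) (ha : ∀ x, g x ≤ a) : b ≤ a := by
  have hb_le := integral_mono (integrable_const b) hf hb
  have ha_ge := integral_mono hg (integrable_const a) ha
  simp only [integral_const, probReal_univ, one_smul] at hb_le ha_ge
  linarith

variable {ν : Measure ℝ} [IsFiniteMeasure ν] {f₁ f₂ : ℝ → ℝ} {b : ℝ}

lemma setIntegral_Iic_le_of_mul_measureReal_Ioi_le (hf₁ : Integrable f₁ ν)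
    (hf₂ : Integrable f₂ ν) (h_eq : ∫ x, f₁ x ∂ν = ∫ x, f₂ x ∂ν) (hb : ∀ x, b ≤ f₁ x)
    (ha : ∀ x, f₂ x ≤ a) {s t : ℝ} (h : a * ν.real (Ioi s) ≤ b * ν.real (Ioi t)) :
    ∫ x in Iic t, f₁ x ∂ν ≤ ∫ x in Iic s, f₂ x ∂ν := by
  have h₁ := integral_add_compl (s := Iic t) measurableSet_Iic hf₁
  have h₂ := integral_add_compl (s := Iic s) measurableSet_Iic hf₂
  rw [compl_Iic] at h₁ h₂
  have h_tail : ∫ x in Ioi s, f₂ x ∂ν ≤ ∫ x in Ioi t, f₁ x ∂ν :=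
    calc ∫ x in Ioi s, f₂ x ∂ν ≤ a * ν.real (Ioi s) :=
          setIntegral_le_mul_measureReal_of_le measurableSet_Ioi hf₂.integrableOn ha
      _ ≤ b * ν.real (Ioi t) := h
      _ ≤ ∫ x in Ioi t, f₁ x ∂ν := setIntegral_ge_of_const_le_real measurableSet_Ioi
          (measure_ne_top _ _) (fun x _ => hb x) hf₁.integrableOn
  linarith

lemma setIntegral_Iic_lt_of_mul_measureReal_Iic_lt (hf₁ : Integrable f₁ ν)
    (hf₂ : Integrable f₂ ν) (hb : ∀ x, b ≤ f₁ x) (ha : ∀ x, f₂ x ≤ a) {s t : ℝ}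
    (h : a * ν.real (Iic s) < b * ν.real (Iic t)) :
    ∫ x in Iic s, f₂ x ∂ν < ∫ x in Iic t, f₁ x ∂ν :=
  calc ∫ x in Iic s, f₂ x ∂ν ≤ a * ν.real (Iic s) :=
        setIntegral_le_mul_measureReal_of_le measurableSet_Iic hf₂.integrableOn ha
    _ < b * ν.real (Iic t) := h
    _ ≤ ∫ x in Iic t, f₁ x ∂ν := setIntegral_ge_of_const_le_real measurableSet_Iic
        (measure_ne_top _ _) (fun x _ => hb x) hf₁.integrableOn

end Coupling

theorem stmt10_general (σ : NNReal) (hσ : 0 < σ) (f1 f2 : ℝ → ℝ)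
    (h1pos : ∀ t, 0 < f1 t)
    (hint1 : ∫ t, f1 t ∂(gaussianReal 0 (σ ^ 2)) = 1)
    (hint2 : ∫ t, f2 t ∂(gaussianReal 0 (σ ^ 2)) = 1)
    (A2 B1 : ℝ) (hA2 : ∀ t, f2 t ≤ A2) (hB1 : ∀ t, 1 / f1 t ≤ B1)
    (F G : ℝ → ℝ)
    (hF : F = fun t => ∫ s in Set.Iic t, f1 s ∂(gaussianReal 0 (σ ^ 2)))
    (hG : G = fun t => ∫ s in Set.Iic t, f2 s ∂(gaussianReal 0 (σ ^ 2)))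
    (h : ℝ → ℝ) (hh : h = fun t => sInf {s : ℝ | F t ≤ G s}) :
    (∀ t : ℝ, 0 < t → h t ≤ t + 2 * (σ : ℝ) ^ 2 / t * Real.log (A2 * B1)) ∧
    (∀ t : ℝ, t < 0 → h t ≥ t - 2 * (σ : ℝ) ^ 2 / |t| * Real.log (A2 * B1)) := by
  subst hF hG hh
  have hv : σ ^ 2 ≠ 0 := pow_ne_zero 2 hσ.ne'
  have hvar : (σ : ℝ) ^ 2 = ((σ ^ 2 : ℝ≥0) : ℝ) := (NNReal.coe_pow σ 2).symm
  have hf₁ : Integrable f1 (gaussianReal 0 (σ ^ 2)) := .of_integral_ne_zero (by simp [hint1])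
  have hf₂ : Integrable f2 (gaussianReal 0 (σ ^ 2)) := .of_integral_ne_zero (by simp [hint2])
  have hB1_pos : 0 < B1 := (one_div_pos.2 (h1pos 0)).trans_le (hB1 0)
  have hf1_ge : ∀ x, B1⁻¹ ≤ f1 x := fun x => by
    simpa only [one_div] using (one_div_le (h1pos x) hB1_pos).1 (hB1 x)
  have h_eq := hint1.trans hint2.symm
  have hB1_inv_le : B1⁻¹ ≤ A2 := le_of_forall_le_of_integral_eq hf₁ hf₂ h_eq hf1_ge hA2
  have hA2_pos : 0 < A2 := (inv_pos.2 hB1_pos).trans_le hB1_inv_le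
  have hAB : 1 ≤ A2 * B1 := (inv_le_iff_one_le_mul₀ hB1_pos).1 hB1_inv_le
  rw [hvar]
  constructor
  · intro t ht
    refine Real.sInf_le_of_mem_of_nonneg ?_ (by positivity [log_nonneg hAB])
    exact setIntegral_Iic_le_of_mul_measureReal_Ioi_le hf₁ hf₂ h_eq hf1_ge hA2
      (mul_gaussianReal_real_Ioi_add_le hv hA2_pos hB1_pos hAB ht)
  · intro t ht
    refine Real.le_sInf (fun s hs => ?_) ?_
    · by_contra! hs_lt
      exact (setIntegral_Iic_lt_of_mul_measureReal_Iic_lt hf₁ hf₂ hf1_ge hA2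
        (mul_gaussianReal_real_Iic_lt hv hA2_pos hB1_pos hAB ht hs_lt)).not_ge hs
    · have : 0 ≤ 2 * ((σ ^ 2 : ℝ≥0) : ℝ) / |t| * log (A2 * B1) := by
        positivity [log_nonneg hAB]
      linarith

/-- Quantitative bounds on the monotone coupling map `h = G⁻¹ ∘ F` for
densities `f₁, f₂ > 0` relative to `N(0,σ²)`, assuming `1/f₁ ≤ B₁` and `f₂ ≤ A₂`:
for `t > 0`, `h(t) ≤ t + (2σ²/t) log(A₂ B₁)`, and for `t < 0`,
`h(t) ≥ t - (2σ²/|t|) log(A₂ B₁)`. -/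
theorem stmt10 (σ : NNReal) (hσ : 0 < σ) (f1 f2 : ℝ → ℝ)
    (hm1 : Measurable f1) (hm2 : Measurable f2)
    (h1pos : ∀ t, 0 < f1 t) (h2pos : ∀ t, 0 < f2 t)
    (hint1 : ∫ t, f1 t ∂(gaussianReal 0 (σ ^ 2)) = 1)
    (hint2 : ∫ t, f2 t ∂(gaussianReal 0 (σ ^ 2)) = 1)
    (A2 B1 : ℝ) (hA2 : ∀ t, f2 t ≤ A2) (hB1 : ∀ t, 1 / f1 t ≤ B1)
    (F G : ℝ → ℝ)
    (hF : F = fun t => ∫ s in Set.Iic t, f1 s ∂(gaussianReal 0 (σ ^ 2)))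
    (hG : G = fun t => ∫ s in Set.Iic t, f2 s ∂(gaussianReal 0 (σ ^ 2)))
    (h : ℝ → ℝ) (hh : h = fun t => sInf {s : ℝ | F t ≤ G s}) :
    (∀ t : ℝ, 0 < t → h t ≤ t + 2 * (σ : ℝ) ^ 2 / t * Real.log (A2 * B1)) ∧
    (∀ t : ℝ, t < 0 → h t ≥ t - 2 * (σ : ℝ) ^ 2 / |t| * Real.log (A2 * B1)) :=
  stmt10_general σ hσ f1 f2 h1pos hint1 hint2 A2 B1 hA2 hB1 F G hF hG h hh
end

section
/- Let $b\ge2$, $n\ge1$, and let $\{p_k\}_{k=1}^n\subseteq(0,1]$. Let $\{Y_x: x\in\bigcup_{k=1}^n\{1,\dots,b\}^k\}$ be independent $\{0,1\}$-valued random variables with $P(Y_x=1)=p_k$ for $x\in\{1,\dots,b\}^k$, and for $x=(x_1,\dots,x_n)\in\{1,\dots,b\}^n$ set $Z_x:=\prod_{i=1}^n Y_{(x_1,\dots,x_i)}$. Then for every $h:\{1,\dots,b\}^n\to[0,\infty)$ and every $\lambda\in(0,1)$, with $q:=\prod_{k=1}^n p_k$, $E\bigl(e^{-\sum_x h(x)Z_x}\bigr)\le\frac{1}{\lambda^2}\frac{1-q}{q}+\exp\bigl\{-(1-\lambda)q\sum_x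 h(x)\bigr\}$. -/
open MeasureTheory ProbabilityTheory

/-!
Write `S = ∑ h(x) Z_x` and `H = ∑ h(x)`. Each `Z_x` is a product of `n` independent Bernoulli
variables along a path of the tree, so `E Z_x = q` and `E S = qH`. Since `0 ≤ S ≤ H`, the
Bhatia–Davis inequality gives `Var S ≤ (H - qH) qH`, and Chebyshev's inequality yields
`P(S ≤ (1 - λ) qH) ≤ Var S / (λqH)² ≤ (1 - q) / (λ² q)`. Finally `e^{-S} ≤ 1` on that event
and `e^{-S} ≤ e^{-(1-λ)qH}` off it.
-/

/-- Vertices of the `b`-ary tree at levels `1,…,n`: a level `k+1` vertex (for `k : Fin n`)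
is a sequence `Fin (k+1) → Fin b`. -/
abbrev TreeVertex (b n : ℕ) := Σ k : Fin n, (Fin ((k : ℕ) + 1) → Fin b)

/-- `Zind Y x ω` is the indicator that all Bernoulli variables along the path from the
root to the leaf `x` equal one: `Z_x = ∏_{i=1}^n Y_{(x_1,…,x_i)}`. -/
noncomputable def Zind {b n : ℕ} {Ω : Type*} (Y : TreeVertex b n → Ω → Bool)
    (x : Fin n → Fin b) (ω : Ω) : ℝ :=
  ∏ k : Fin n,
    (if Y ⟨k, fun i => x ⟨(i : ℕ), lt_of_lt_of_le i.isLt (Nat.succ_le_of_lt k.isLt)⟩⟩ ω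
        = true then (1 : ℝ) else 0)

section Concentration

variable {Ω : Type*} [MeasurableSpace Ω] {P : Measure Ω} [IsProbabilityMeasure P]
  {S : Ω → ℝ}

lemma integral_exp_neg_le_measureReal_add_exp (hS : Measurable S) (hS0 : ∀ ω, 0 ≤ S ω)
    (c : ℝ) : ∫ ω, Real.exp (-S ω) ∂P ≤ P.real {ω | S ω ≤ c} + Real.exp (-c) := by
  have hA : MeasurableSet {ω | S ω ≤ c} := hS measurableSet_Iic
  have hInd : Integrable ({ω | S ω ≤ c}.indicator (1 : Ω → ℝ)) P :=
    (integrable_const 1).indicator hA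
  have hbound : ∀ ω, Real.exp (-S ω) ≤ {ω | S ω ≤ c}.indicator 1 ω + Real.exp (-c) := by
    intro ω
    by_cases hω : S ω ≤ c
    · rw [Set.indicator_of_mem (s := {ω | S ω ≤ c}) hω, Pi.one_apply]
      linarith [Real.exp_le_one_iff.mpr (neg_nonpos.mpr (hS0 ω)), Real.exp_pos (-c)]
    · rw [Set.indicator_of_notMem (s := {ω | S ω ≤ c}) hω, zero_add]
      exact Real.exp_le_exp.mpr (by linarith)
  calc ∫ ω, Real.exp (-S ω) ∂P
      ≤ ∫ ω, ({ω | S ω ≤ c}.indicator 1 ω + Real.exp (-c)) ∂P := by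
        refine integral_mono_of_nonneg (ae_of_all _ fun ω => (Real.exp_pos _).le)
          (hInd.add (integrable_const _)) (ae_of_all _ hbound)
    _ = P.real {ω | S ω ≤ c} + Real.exp (-c) := by
        rw [integral_add hInd (integrable_const _), integral_indicator_one hA, integral_const,
          probReal_univ, one_smul]

lemma measureReal_setOf_le_mul_integral_le (hS : Measurable S) {H : ℝ}
    (hSH : ∀ ω, S ω ∈ Set.Icc 0 H) {lam : ℝ} (hlam : 0 < lam) (hmean : 0 < P[S]) :
    P.real {ω | S ω ≤ (1 - lam) * P[S]} ≤ (H - P[S]) / (lam ^ 2 * P[S]) := by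
  have hc : 0 < lam * P[S] := mul_pos hlam hmean
  have hsub : {ω | S ω ≤ (1 - lam) * P[S]} ⊆ {ω | lam * P[S] ≤ |S ω - P[S]|} := by
    intro ω hω
    simp only [Set.mem_ofPred_eq] at hω ⊢
    rw [abs_sub_comm, le_abs]
    left; linarith
  have hvar : variance S P ≤ (H - P[S]) * P[S] :=
    (variance_le_sub_mul_sub (ae_of_all _ hSH) hS.aemeasurable).trans_eq (by rw [sub_zero])
  have hbound : (H - P[S]) * P[S] / (lam * P[S]) ^ 2 = (H - P[S]) / (lam ^ 2 * P[S]) := by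
    field_simp
  rw [← hbound]
  refine ENNReal.toReal_le_of_le_ofReal ?_ ?_
  · have : 0 ≤ H - P[S] := nonneg_of_mul_nonneg_left ((variance_nonneg S P).trans hvar) hmean
    positivity
  calc P {ω | S ω ≤ (1 - lam) * P[S]}
      ≤ P {ω | lam * P[S] ≤ |S ω - P[S]|} := measure_mono hsub
    _ ≤ ENNReal.ofReal (variance S P / (lam * P[S]) ^ 2) :=
        meas_ge_le_variance_div_sq
          (memLp_of_bounded (ae_of_all _ hSH) hS.aestronglyMeasurable 2) hc
    _ ≤ _ := ENNReal.ofReal_le_ofReal (by gcongr)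

lemma integral_exp_neg_le_of_integral_eq (hS : Measurable S) {H q lam : ℝ}
    (hSH : ∀ ω, S ω ∈ Set.Icc 0 H) (hq0 : 0 < q) (hq1 : q ≤ 1) (hmean : P[S] = q * H)
    (hlam : lam ∈ Set.Ioo (0 : ℝ) 1) :
    ∫ ω, Real.exp (-S ω) ∂P ≤ 1 / lam ^ 2 * ((1 - q) / q) + Real.exp (-(1 - lam) * q * H) := by
  obtain ⟨hlam0, hlam1⟩ := hlam
  rcases lt_or_ge 0 H with hH | hH
  · have hmean0 : 0 < P[S] := hmean ▸ mul_pos hq0 hH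
    calc ∫ ω, Real.exp (-S ω) ∂P
        ≤ P.real {ω | S ω ≤ (1 - lam) * P[S]} + Real.exp (-((1 - lam) * P[S])) :=
          integral_exp_neg_le_measureReal_add_exp hS (fun ω => (hSH ω).1) _
      _ ≤ (H - P[S]) / (lam ^ 2 * P[S]) + Real.exp (-((1 - lam) * P[S])) := by
          gcongr
          exact measureReal_setOf_le_mul_integral_le hS hSH hlam0 hmean0
      _ = 1 / lam ^ 2 * ((1 - q) / q) + Real.exp (-(1 - lam) * q * H) := by
          rw [hmean]
          congr 1
          · field_simp
          · ring_nf
  · have hexp : ∀ ω, Real.exp (-S ω) ≤ 1 := fun ω =>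
      Real.exp_le_one_iff.mpr (neg_nonpos.mpr (hSH ω).1)
    calc ∫ ω, Real.exp (-S ω) ∂P ≤ ∫ _, (1 : ℝ) ∂P :=
          integral_mono_of_nonneg (ae_of_all _ fun ω => (Real.exp_pos _).le)
            (integrable_const 1) (ae_of_all _ hexp)
      _ = 0 + Real.exp 0 := by simp
      _ ≤ 1 / lam ^ 2 * ((1 - q) / q) + Real.exp (-(1 - lam) * q * H) := by
          gcongr
          · exact mul_nonneg (by positivity) (div_nonneg (by linarith) hq0.le)
          · have : 0 ≤ (1 - lam) * q := mul_nonneg (by linarith) hq0.le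
            nlinarith

end Concentration

section Tree

variable {b n : ℕ}

def treePath (x : Fin n → Fin b) (k : Fin n) : TreeVertex b n :=
  ⟨k, fun i => x ⟨(i : ℕ), lt_of_lt_of_le i.isLt (Nat.succ_le_of_lt k.isLt)⟩⟩

lemma treePath_injective (x : Fin n → Fin b) : Function.Injective (treePath x) :=
  fun _ _ h => congrArg Sigma.fst h

variable {Ω : Type*} (Y : TreeVertex b n → Ω → Bool)

lemma Zind_eq_prod (x : Fin n → Fin b) (ω : Ω) :
    Zind Y x ω = ∏ k, if Y (treePath x k) ω = true then (1 : ℝ) else 0 := rfl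

lemma Zind_mem_Icc (x : Fin n → Fin b) (ω : Ω) : Zind Y x ω ∈ Set.Icc 0 1 := by
  rw [Zind_eq_prod]
  exact ⟨Finset.prod_nonneg fun _ _ => by split <;> norm_num,
    Finset.prod_le_one (fun _ _ => by split <;> norm_num) fun _ _ => by split <;> norm_num⟩

lemma sum_mul_Zind_mem_Icc {h : (Fin n → Fin b) → ℝ} (hh : ∀ x, 0 ≤ h x) (ω : Ω) :
    ∑ x, h x * Zind Y x ω ∈ Set.Icc 0 (∑ x, h x) :=
  ⟨Finset.sum_nonneg fun x _ => mul_nonneg (hh x) (Zind_mem_Icc Y x ω).1,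
    Finset.sum_le_sum fun x _ => mul_le_of_le_one_right (hh x) (Zind_mem_Icc Y x ω).2⟩

variable [MeasurableSpace Ω]

lemma measurable_Zind (hY : ∀ v, Measurable (Y v)) (x : Fin n → Fin b) :
    Measurable (Zind Y x) := by
  rw [funext (Zind_eq_prod Y x)]
  exact Finset.measurable_fun_prod _ fun k _ =>
    Measurable.ite (hY _ (measurableSet_singleton true)) measurable_const measurable_const

lemma integral_ite_eq_true {P : Measure Ω} {Z : Ω → Bool} (hZ : Measurable Z) :
    ∫ ω, (if Z ω = true then (1 : ℝ) else 0) ∂P = P.real {ω | Z ω = true} := by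
  have hA : MeasurableSet {ω | Z ω = true} := hZ (measurableSet_singleton true)
  rw [← integral_indicator_one hA]
  simp only [Set.indicator_apply, Set.mem_ofPred_eq, Pi.one_apply]

lemma integral_Zind {P : Measure Ω} (p : ℕ → ℝ) (hY : ∀ v, Measurable (Y v))
    (hind : iIndepFun (m := fun _ => ⊤) Y P)
    (hlaw : ∀ v : TreeVertex b n,
      P {ω | Y v ω = true} = ENNReal.ofReal (p ((v.1 : ℕ) + 1)))
    (hp : ∀ k, 1 ≤ k → k ≤ n → 0 ≤ p k) (x : Fin n → Fin b) :
    P[Zind Y x] = ∏ k ∈ Finset.Icc 1 n, p k := by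
  have hfactor : ∀ k : Fin n,
      ∫ ω, (if Y (treePath x k) ω = true then (1 : ℝ) else 0) ∂P = p (k + 1) := by
    intro k
    rw [integral_ite_eq_true (hY _), measureReal_def, hlaw]
    exact ENNReal.toReal_ofReal (hp _ (Nat.le_add_left 1 k) k.isLt)
  simp_rw [Zind_eq_prod]
  rw [(hind.precomp (treePath_injective x)).integral_fun_prod_comp
    (f := fun _ z => if z = true then (1 : ℝ) else 0) (fun k => (hY _).aemeasurable)
    (fun _ => (measurable_of_countable _).aestronglyMeasurable)]
  simp only [hfactor]
  rw [Fin.prod_univ_eq_prod_range (fun k => p (k + 1)), Finset.range_eq_Ico,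
    Finset.prod_Ico_add' p, zero_add]
  rfl

lemma integral_sum_mul_Zind {P : Measure Ω} [IsFiniteMeasure P] (p : ℕ → ℝ)
    (hY : ∀ v, Measurable (Y v)) (hind : iIndepFun (m := fun _ => ⊤) Y P)
    (hlaw : ∀ v : TreeVertex b n,
      P {ω | Y v ω = true} = ENNReal.ofReal (p ((v.1 : ℕ) + 1)))
    (hp : ∀ k, 1 ≤ k → k ≤ n → 0 ≤ p k) (h : (Fin n → Fin b) → ℝ) :
    P[fun ω => ∑ x, h x * Zind Y x ω] = (∏ k ∈ Finset.Icc 1 n, p k) * ∑ x, h x := by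
  rw [integral_finsetSum _ fun x _ => (Integrable.of_mem_Icc 0 1
    (measurable_Zind Y hY x).aemeasurable (ae_of_all _ (Zind_mem_Icc Y x))).const_mul _]
  simp_rw [integral_const_mul, integral_Zind Y p hY hind hlaw hp, Finset.mul_sum, mul_comm]

end Tree

theorem stmt13_general {Ω : Type*} [MeasurableSpace Ω] (P : Measure Ω) [IsProbabilityMeasure P]
    (b n : ℕ) (p : ℕ → ℝ)
    (hp : ∀ k, 1 ≤ k → k ≤ n → 0 < p k ∧ p k ≤ 1)
    (Y : TreeVertex b n → Ω → Bool) (hYm : ∀ v, Measurable (Y v))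
    (hind : iIndepFun (m := fun _ => ⊤) Y P)
    (hlaw : ∀ v : TreeVertex b n,
      P {ω | Y v ω = true} = ENNReal.ofReal (p ((v.1 : ℕ) + 1)))
    (h : (Fin n → Fin b) → ℝ) (hh : ∀ x, 0 ≤ h x)
    (lam : ℝ) (hlam : lam ∈ Set.Ioo (0 : ℝ) 1) :
    ∫ ω, Real.exp (-∑ x, h x * Zind Y x ω) ∂P ≤
      1 / lam ^ 2 * ((1 - ∏ k ∈ Finset.Icc 1 n, p k) / ∏ k ∈ Finset.Icc 1 n, p k) +
        Real.exp (-(1 - lam) * (∏ k ∈ Finset.Icc 1 n, p k) * ∑ x, h x) := by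
  have hpIcc : ∀ k ∈ Finset.Icc 1 n, 0 < p k ∧ p k ≤ 1 := fun k hk =>
    hp k (Finset.mem_Icc.mp hk).1 (Finset.mem_Icc.mp hk).2
  have hq0 : 0 < ∏ k ∈ Finset.Icc 1 n, p k := Finset.prod_pos fun k hk => (hpIcc k hk).1
  have hq1 : ∏ k ∈ Finset.Icc 1 n, p k ≤ 1 :=
    Finset.prod_le_one (fun k hk => (hpIcc k hk).1.le) fun k hk => (hpIcc k hk).2
  have hS : Measurable fun ω => ∑ x, h x * Zind Y x ω :=
    Finset.measurable_fun_sum _ fun x _ => (measurable_Zind Y hYm x).const_mul _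
  exact integral_exp_neg_le_of_integral_eq hS (sum_mul_Zind_mem_Icc Y hh) hq0 hq1
    (integral_sum_mul_Zind Y p hYm hind hlaw (fun k hk₁ hk₂ => (hp k hk₁ hk₂).1.le) h) hlam

/-- Reverse-Jensen bound for tree-indexed Bernoulli variables:
with `q = ∏_{k=1}^n p_k`, for every `h ≥ 0` and `λ ∈ (0,1)`,
`E(e^{-∑_x h(x) Z_x}) ≤ λ⁻² (1-q)/q + exp{-(1-λ) q ∑_x h(x)}`. -/
theorem stmt13 {Ω : Type*} [MeasurableSpace Ω] (P : Measure Ω) [IsProbabilityMeasure P]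
    (b n : ℕ) (hb : 2 ≤ b) (hn : 1 ≤ n) (p : ℕ → ℝ)
    (hp : ∀ k, 1 ≤ k → k ≤ n → 0 < p k ∧ p k ≤ 1)
    (Y : TreeVertex b n → Ω → Bool) (hYm : ∀ v, Measurable (Y v))
    (hind : iIndepFun (m := fun _ => ⊤) Y P)
    (hlaw : ∀ v : TreeVertex b n,
      P {ω | Y v ω = true} = ENNReal.ofReal (p ((v.1 : ℕ) + 1)))
    (h : (Fin n → Fin b) → ℝ) (hh : ∀ x, 0 ≤ h x)
    (lam : ℝ) (hlam : lam ∈ Set.Ioo (0 : ℝ) 1) :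
    ∫ ω, Real.exp (-∑ x, h x * Zind Y x ω) ∂P ≤
      1 / lam ^ 2 * ((1 - ∏ k ∈ Finset.Icc 1 n, p k) / ∏ k ∈ Finset.Icc 1 n, p k) +
        Real.exp (-(1 - lam) * (∏ k ∈ Finset.Icc 1 n, p k) * ∑ x, h x) :=
  stmt13_general P b n p hp Y hYm hind hlaw h hh lam hlam
end

section
/- Let $\mathcal Z$ be an a.s.-positive finite random variable, $\alpha>0$, $b\ge2$ with $\alpha=\sqrt{2\log b}$, and suppose the law of the maximum $M_n$ of a branching random walk with $b$ branches and i.i.d. $\mathcal N(0,1)$ increments satisfies $P(M_n\le m_n+u)\to E(e^{-\alpha^{-1}e^{-\alpha u}\mathcal Z})$ for all $u\in\mathbb R$, where $m_n-m_{n-1}\to\alpha$. Then $\mathcal Z$ satisfies the cascade relation $\mathcal Z\overset{\mathrm{law}}=\sum_{i=1}^b e^{\alpha\zeta_i-\alpha^2}\mathcal Z_i$, where $\zeta_1,\dots,\zeta_b$ are i.i.d. $\mathcal N(0,1)$ and $\mathcal Z_1,\dots,\mathcal Z_b$ are i.i.d. copies of $\mathcal Z$ independent of the $\zeta_i$'s.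 -/
/-!
The CDFs `F n` of the maxima satisfy `F (n+1) x = E ∏ᵢ F n (x - ζᵢ)`. Evaluating this at
`x = m (n+1) + u` and letting `n → ∞` gives a fixed-point equation for the limit profile
`φ u = L (α⁻¹ e^{-αu})`, where `L` is the Laplace transform of `𝒵`; the pointwise limit may be taken
inside `F n` at moving arguments because the `F n` are monotone and `φ` is continuous.
Substituting `t = α⁻¹ e^{-αu}` turns it into `L t = E ∏ᵢ L (t e^{αζᵢ-α²})`, the Laplace transform of
`∑ᵢ e^{αζᵢ-α²} 𝒵ᵢ`. Both laws live on `[0, ∞)`, where the push-forward by `x ↦ e^{-x}` turns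
Laplace transforms at integers into moments of laws on `[0, 1]`, which Weierstrass approximation
shows to be determining.
-/

open MeasureTheory ProbabilityTheory Filter
open Set Polynomial Topology

variable {ι : Type*} [Fintype ι]

lemma Continuous.integrable_of_ae_mem_compact {X E : Type*} [TopologicalSpace X] [T2Space X]
    [MeasurableSpace X] [OpensMeasurableSpace X] [NormedAddCommGroup E] {g : X → E}
    (hg : Continuous g) {μ : Measure X} [IsFiniteMeasure μ] {K : Set X} (hK : IsCompact K)
    (hμ : ∀ᵐ x ∂μ, x ∈ K) : Integrable g μ := by
  rw [← Measure.restrict_eq_self_of_ae_mem hμ]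
  exact hg.continuousOn.integrableOn_compact hK

lemma dist_integral_le_of_ae_dist_le {α E : Type*} [MeasurableSpace α] [NormedAddCommGroup E]
    [NormedSpace ℝ E] {μ : Measure α} [IsFiniteMeasure μ] {f g : α → E} (hf : Integrable f μ)
    (hg : Integrable g μ) {C : ℝ} (h : ∀ᵐ x ∂μ, dist (f x) (g x) ≤ C) :
    dist (∫ x, f x ∂μ) (∫ x, g x ∂μ) ≤ C * μ.real univ := by
  rw [dist_eq_norm, ← integral_sub hf hg]
  exact norm_integral_le_of_norm_le_const (h.mono fun x hx => by rwa [← dist_eq_norm])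

lemma integral_eval_eq_sum_moments {μ : Measure ℝ}
    (hμ : ∀ k : ℕ, Integrable (fun x => x ^ k) μ) (p : ℝ[X]) :
    ∫ x, p.eval x ∂μ = ∑ k ∈ Finset.range (p.natDegree + 1), p.coeff k * ∫ x, x ^ k ∂μ := by
  simp_rw [eval_eq_sum_range]
  rw [integral_finsetSum _ fun k _ => (hμ k).const_mul _]
  simp_rw [integral_const_mul]

theorem MeasureTheory.Measure.ext_of_integral_pow_eq {a b : ℝ} {μ ν : Measure ℝ} [IsFiniteMeasure μ]
    [IsFiniteMeasure ν] (hμ : ∀ᵐ x ∂μ, x ∈ Icc a b) (hν : ∀ᵐ x ∂ν, x ∈ Icc a b)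
    (h : ∀ k : ℕ, ∫ x, x ^ k ∂μ = ∫ x, x ^ k ∂ν) : μ = ν := by
  have hint : ∀ {κ : Measure ℝ} [IsFiniteMeasure κ], (∀ᵐ x ∂κ, x ∈ Icc a b) →
      ∀ g : ℝ → ℝ, Continuous g → Integrable g κ :=
    fun hκ _ hg => hg.integrable_of_ae_mem_compact isCompact_Icc hκ
  refine ext_of_forall_integral_eq_of_IsFiniteMeasure fun f => ?_
  refine eq_of_forall_dist_le fun ε hε => ?_
  set C := μ.real univ + ν.real univ + 1
  have hC : 0 < C := by positivity
  obtain ⟨p, hp⟩ :=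
    exists_polynomial_near_of_continuousOn a b f f.continuous.continuousOn (ε / C) (by positivity)
  have hpoly : ∫ x, p.eval x ∂μ = ∫ x, p.eval x ∂ν := by
    rw [integral_eval_eq_sum_moments (fun k => hint hμ _ (continuous_pow k)),
      integral_eval_eq_sum_moments (fun k => hint hν _ (continuous_pow k))]
    simp_rw [h]
  have happrox : ∀ {κ : Measure ℝ} [IsFiniteMeasure κ], (∀ᵐ x ∂κ, x ∈ Icc a b) →
      dist (∫ x, f x ∂κ) (∫ x, p.eval x ∂κ) ≤ ε / C * κ.real univ := fun hκ =>
    dist_integral_le_of_ae_dist_le (hint hκ _ f.continuous) (hint hκ _ p.continuous)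
      (hκ.mono fun x hx => by rw [dist_comm]; exact (hp x hx).le)
  calc dist (∫ x, f x ∂μ) (∫ x, f x ∂ν)
      ≤ dist (∫ x, f x ∂μ) (∫ x, p.eval x ∂μ)
        + dist (∫ x, f x ∂ν) (∫ x, p.eval x ∂ν) := by
        rw [hpoly, dist_comm (∫ x, f x ∂ν)]; exact dist_triangle _ _ _
    _ ≤ ε / C * μ.real univ + ε / C * ν.real univ := add_le_add (happrox hμ) (happrox hν)
    _ ≤ ε := by
        rw [← mul_add, div_mul_eq_mul_div, div_le_iff₀ hC]
        exact mul_le_mul_of_nonneg_left (by linarith) hε.le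

noncomputable def laplaceTransform (μ : Measure ℝ) (t : ℝ) : ℝ :=
  ∫ x, Real.exp (-(t * x)) ∂μ

lemma integral_pow_map_exp_neg (μ : Measure ℝ) (k : ℕ) :
    ∫ y, y ^ k ∂(μ.map fun x => Real.exp (-x)) = laplaceTransform μ k := by
  rw [integral_map (by fun_prop) (by fun_prop), laplaceTransform]
  simp_rw [← Real.exp_nat_mul, mul_neg]

theorem MeasureTheory.Measure.ext_of_laplaceTransform_eq {μ ν : Measure ℝ} [IsProbabilityMeasure μ]
    [IsProbabilityMeasure ν] (hμ : ∀ᵐ x ∂μ, 0 ≤ x) (hν : ∀ᵐ x ∂ν, 0 ≤ x)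
    (h : ∀ t, 0 < t → laplaceTransform μ t = laplaceTransform ν t) : μ = ν := by
  have hT : MeasurableEmbedding fun x : ℝ => Real.exp (-x) :=
    (by fun_prop : Continuous fun x : ℝ => Real.exp (-x)).measurableEmbedding
      (Real.exp_injective.comp neg_injective)
  have hIcc : ∀ {κ : Measure ℝ}, (∀ᵐ x ∂κ, 0 ≤ x) →
      ∀ᵐ y ∂κ.map (fun x => Real.exp (-x)), y ∈ Icc 0 1 := fun hκ =>
    (ae_map_iff hT.measurable.aemeasurable measurableSet_Icc).2 <| hκ.mono fun x hx =>
      ⟨(Real.exp_pos _).le, Real.exp_le_one_iff.2 (neg_nonpos.2 hx)⟩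
  refine hT.map_injective (Measure.ext_of_integral_pow_eq (hIcc hμ) (hIcc hν) fun k => ?_)
  rw [integral_pow_map_exp_neg, integral_pow_map_exp_neg]
  rcases Nat.eq_zero_or_pos k with rfl | hk
  · simp [laplaceTransform]
  · exact h k (Nat.cast_pos.2 hk)

lemma continuousOn_laplaceTransform (μ : Measure ℝ) [IsFiniteMeasure μ]
    (hμ : ∀ᵐ x ∂μ, 0 ≤ x) : ContinuousOn (laplaceTransform μ) (Ici 0) := by
  refine continuousOn_of_dominated (bound := fun _ => 1)
    (fun t _ => (by fun_prop : Continuous fun x => Real.exp (-(t * x))).aestronglyMeasurable)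
    (fun t ht => ?_) (integrable_const 1) (ae_of_all _ fun x => by fun_prop)
  filter_upwards [hμ] with x hx
  rw [Real.norm_of_nonneg (Real.exp_pos _).le, Real.exp_le_one_iff, neg_nonpos]
  exact mul_nonneg ht hx

lemma measure_map_iSup_add_Iic [Nonempty ι] (γ : Measure (ι → ℝ)) [SFinite γ]
    (μ : Measure ℝ) [SigmaFinite μ] (x : ℝ) :
    (γ.prod (Measure.pi fun _ : ι => μ)).map (fun q => ⨆ i, q.1 i + q.2 i) (Iic x)
      = ∫⁻ ζ, ∏ i, μ (Iic (x - ζ i)) ∂γ := by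
  have hmax : Measurable fun q : (ι → ℝ) × (ι → ℝ) => ⨆ i, q.1 i + q.2 i :=
    Measurable.iSup fun i => by fun_prop
  have hpre : (fun q : (ι → ℝ) × (ι → ℝ) => ⨆ i, q.1 i + q.2 i) ⁻¹' Iic x
      = {q | ∀ i, q.1 i + q.2 i ≤ x} := by
    ext q
    exact ciSup_le_iff (finite_range fun i => q.1 i + q.2 i).bddAbove
  have hslice : ∀ ζ : ι → ℝ, Prod.mk ζ ⁻¹' {q : (ι → ℝ) × (ι → ℝ) | ∀ i, q.1 i + q.2 i ≤ x}
      = univ.pi fun i => Iic (x - ζ i) := fun ζ => by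
    ext w
    simp only [mem_preimage, mem_ofPred_eq, Set.mem_pi, mem_univ, mem_Iic, forall_const,
      le_sub_iff_add_le']
  rw [Measure.map_apply hmax measurableSet_Iic, hpre,
    Measure.prod_apply (hpre ▸ hmax measurableSet_Iic)]
  simp_rw [hslice, Measure.pi_pi]

lemma cdf_map_iSup_add [Nonempty ι] (γ : Measure (ι → ℝ)) [IsProbabilityMeasure γ]
    (μ : Measure ℝ) [IsProbabilityMeasure μ] (x : ℝ) :
    cdf ((γ.prod (Measure.pi fun _ : ι => μ)).map (fun q => ⨆ i, q.1 i + q.2 i)) x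
      = ∫ ζ, ∏ i, cdf μ (x - ζ i) ∂γ := by
  have : IsProbabilityMeasure
      ((γ.prod (Measure.pi fun _ : ι => μ)).map (fun q => ⨆ i, q.1 i + q.2 i)) :=
    Measure.isProbabilityMeasure_map (Measurable.iSup fun i => by fun_prop).aemeasurable
  rw [cdf_eq_real, measureReal_def, measure_map_iSup_add_Iic, ← integral_toReal]
  · simp_rw [ENNReal.toReal_prod, cdf_eq_real, measureReal_def]
  · have hIic : Measurable fun y => μ (Iic y) :=
      Monotone.measurable fun _ _ h => measure_mono (Iic_subset_Iic.2 h)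
    exact (Finset.measurable_prod _ fun i _ => hIic.comp (by fun_prop)).aemeasurable
  · exact ae_of_all _ fun ζ => ENNReal.prod_lt_top fun i _ => measure_lt_top _ _

lemma tendsto_apply_of_monotone {G : ℕ → ℝ → ℝ} (hG : ∀ n, Monotone (G n)) {φ : ℝ → ℝ}
    (hconv : ∀ u, Tendsto (fun n => G n u) atTop (𝓝 (φ u))) {c : ℝ} (hφ : ContinuousAt φ c)
    {u : ℕ → ℝ} (hu : Tendsto u atTop (𝓝 c)) :
    Tendsto (fun n => G n (u n)) atTop (𝓝 (φ c)) := by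
  refine tendsto_order.2 ⟨fun a ha => ?_, fun a ha => ?_⟩
  · obtain ⟨v, hav, hvc⟩ := ((hφ.eventually (lt_mem_nhds ha)).filter_mono
      nhdsWithin_le_nhds |>.and self_mem_nhdsWithin).exists (f := 𝓝[<] c)
    filter_upwards [(hconv v).eventually (lt_mem_nhds hav), hu.eventually (lt_mem_nhds hvc)]
      with n hn hvu
    exact hn.trans_le (hG n hvu.le)
  · obtain ⟨v, hav, hvc⟩ := ((hφ.eventually (gt_mem_nhds ha)).filter_mono
      nhdsWithin_le_nhds |>.and self_mem_nhdsWithin).exists (f := 𝓝[>] c)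
    filter_upwards [(hconv v).eventually (gt_mem_nhds hav), hu.eventually (gt_mem_nhds hvc)]
      with n hn hvu
    exact (hG n hvu.le).trans_lt hn

lemma fixedPoint_of_tendsto_cdf (γ : Measure (ι → ℝ)) [IsFiniteMeasure γ] {μ : ℕ → Measure ℝ}
    (hrec : ∀ n x, cdf (μ (n + 1)) x = ∫ ζ, ∏ i, cdf (μ n) (x - ζ i) ∂γ)
    {m : ℕ → ℝ} {α : ℝ} (hm : Tendsto (fun n => m (n + 1) - m n) atTop (𝓝 α))
    {φ : ℝ → ℝ} (hφ : Continuous φ)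
    (hconv : ∀ u, Tendsto (fun n => cdf (μ n) (m n + u)) atTop (𝓝 (φ u))) (u : ℝ) :
    φ u = ∫ ζ, ∏ i, φ (u + α - ζ i) ∂γ := by
  refine tendsto_nhds_unique ((hconv u).comp (tendsto_add_atTop_nat 1)) ?_
  simp_rw [Function.comp_def, hrec]
  refine tendsto_integral_of_dominated_convergence (fun _ => 1) (fun n => ?_)
    (integrable_const 1) (fun n => ae_of_all _ fun ζ => ?_) (ae_of_all _ fun ζ => ?_)
  · exact (Finset.measurable_prod _ fun i _ =>
      (monotone_cdf _).measurable.comp (by fun_prop)).aestronglyMeasurable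
  · rw [Real.norm_of_nonneg (Finset.prod_nonneg fun i _ => cdf_nonneg _ _)]
    exact Finset.prod_le_one (fun i _ => cdf_nonneg _ _) fun i _ => cdf_le_one _ _
  · refine tendsto_finsetProd _ fun i _ => ?_
    have hshift : Tendsto (fun n => m (n + 1) - m n + u - ζ i) atTop (𝓝 (u + α - ζ i)) := by
      simpa only [add_comm α] using (hm.add_const u).sub_const (ζ i)
    have hmono : ∀ n, Monotone fun v => cdf (μ n) (m n + v) :=
      fun n _ _ h => monotone_cdf (μ n) (add_le_add_right h _)
    convert tendsto_apply_of_monotone hmono hconv hφ.continuousAt hshift using 2 with n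
    ring_nf

lemma ae_nonneg_snd_prod_pi (γ : Measure (ι → ℝ)) [SFinite γ] {ρ : Measure ℝ} [SigmaFinite ρ]
    (hρ : ∀ᵐ z ∂ρ, 0 ≤ z) : ∀ᵐ q ∂(γ.prod (Measure.pi fun _ : ι => ρ)), ∀ i, 0 ≤ q.2 i :=
  Measure.quasiMeasurePreserving_snd.ae
    (eventually_all.2 fun _ => Measure.tendsto_eval_ae_ae.eventually hρ)

lemma ae_nonneg_map_sum_mul (γ : Measure (ι → ℝ)) [SFinite γ] {ρ : Measure ℝ} [SigmaFinite ρ]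
    (hρ : ∀ᵐ z ∂ρ, 0 ≤ z) {g : ℝ → ℝ} (hg : Measurable g) (hg0 : ∀ x, 0 ≤ g x) :
    ∀ᵐ x ∂(γ.prod (Measure.pi fun _ : ι => ρ)).map (fun q => ∑ i, g (q.1 i) * q.2 i), 0 ≤ x :=
  (ae_map_iff (by fun_prop) measurableSet_Ici).2 <| (ae_nonneg_snd_prod_pi γ hρ).mono
    fun _ hq => Finset.sum_nonneg fun i _ => mul_nonneg (hg0 _) (hq i)

lemma laplaceTransform_map_sum_mul (γ : Measure (ι → ℝ)) [IsFiniteMeasure γ] {ρ : Measure ℝ}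
    [IsFiniteMeasure ρ] (hρ : ∀ᵐ z ∂ρ, 0 ≤ z) {g : ℝ → ℝ} (hg : Measurable g)
    (hg0 : ∀ x, 0 ≤ g x) {t : ℝ} (ht : 0 ≤ t) :
    laplaceTransform ((γ.prod (Measure.pi fun _ : ι => ρ)).map
        (fun q => ∑ i, g (q.1 i) * q.2 i)) t
      = ∫ ζ, ∏ i, laplaceTransform ρ (t * g (ζ i)) ∂γ := by
  have hexp : ∀ q : (ι → ℝ) × (ι → ℝ), Real.exp (-(t * ∑ i, g (q.1 i) * q.2 i))
      = ∏ i, Real.exp (-(t * g (q.1 i) * q.2 i)) := fun q => by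
    rw [← Real.exp_sum, Finset.mul_sum, ← Finset.sum_neg_distrib]
    simp_rw [mul_assoc]
  have hint : Integrable
      (fun q : (ι → ℝ) × (ι → ℝ) => ∏ i, Real.exp (-(t * g (q.1 i) * q.2 i)))
      (γ.prod (Measure.pi fun _ : ι => ρ)) := by
    refine Integrable.of_bound (C := 1) (by fun_prop) ?_
    filter_upwards [ae_nonneg_snd_prod_pi γ hρ] with q hq
    rw [Real.norm_of_nonneg (by positivity)]
    refine Finset.prod_le_one (fun i _ => by positivity) fun i _ => ?_
    rw [Real.exp_le_one_iff, neg_nonpos]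
    exact mul_nonneg (mul_nonneg ht (hg0 _)) (hq i)
  rw [laplaceTransform, integral_map (by fun_prop) (by fun_prop)]
  simp_rw [hexp]
  rw [integral_prod _ hint]
  congr 1 with ζ
  exact integral_fintype_prod_eq_prod fun i z => Real.exp (-(t * g (ζ i) * z))

lemma smoothing_fixedPoint_of_shift_fixedPoint (γ : Measure (ι → ℝ)) {f : ℝ → ℝ} {α : ℝ}
    (hα : 0 < α)
    (hfix : ∀ u, f (α⁻¹ * Real.exp (-α * u))
      = ∫ ζ, ∏ i, f (α⁻¹ * Real.exp (-α * (u + α - ζ i))) ∂γ) {t : ℝ} (ht : 0 < t) :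
    f t = ∫ ζ, ∏ i, f (t * Real.exp (α * ζ i - α ^ 2)) ∂γ := by
  obtain ⟨u, rfl⟩ : ∃ u, α⁻¹ * Real.exp (-α * u) = t := ⟨-Real.log (α * t) / α, by
    rw [show -α * (-Real.log (α * t) / α) = Real.log (α * t) by field_simp,
      Real.exp_log (by positivity), inv_mul_cancel_left₀ hα.ne']⟩
  have hshift : ∀ w, α⁻¹ * Real.exp (-α * (u + α - w))
      = α⁻¹ * Real.exp (-α * u) * Real.exp (α * w - α ^ 2) := fun w => by
    rw [mul_assoc, ← Real.exp_add]; ring_nf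
  simp_rw [hfix u, hshift]

/-- Cascade relation for the limit of the centered maximum of a
Gaussian branching random walk: if the laws `μM n` of the maxima satisfy the branching
recursion `M_n =law max_{i≤b}(ζ_i + M_{n-1}^{(i)})` with i.i.d. `N(0,1)` increments,
`m_n - m_{n-1} → α = √(2 log b)`, and `P(M_n ≤ m_n + u) → E(e^{-α⁻¹ e^{-αu} 𝒵})` for all
`u ∈ ℝ` where `𝒵` has law `ρ` (a.s. positive and finite), then `ρ` satisfies the cascade
relation `𝒵 =law ∑_{i=1}^b e^{α ζ_i - α²} 𝒵_i` with `ζ_i` i.i.d. `N(0,1)` independent of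
the i.i.d. copies `𝒵_i` of `𝒵`. -/
theorem stmt19 (b : ℕ) (hb : 2 ≤ b) (α : ℝ) (hα : α = Real.sqrt (2 * Real.log b))
    (ρ : Measure ℝ) [IsProbabilityMeasure ρ] (hpos : ρ (Set.Iic 0) = 0)
    (μM : ℕ → Measure ℝ) (hprob : ∀ n, IsProbabilityMeasure (μM n))
    (hrec : ∀ n : ℕ, μM (n + 1) =
      Measure.map (fun q : (Fin b → ℝ) × (Fin b → ℝ) => ⨆ i, (q.1 i + q.2 i))
        ((Measure.pi fun _ : Fin b => gaussianReal 0 1).prod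
          (Measure.pi fun _ : Fin b => μM n)))
    (m : ℕ → ℝ) (hm : Tendsto (fun n => m (n + 1) - m n) atTop (nhds α))
    (hconv : ∀ u : ℝ, Tendsto (fun n => (μM n (Set.Iic (m n + u))).toReal) atTop
      (nhds (∫ z, Real.exp (-(α⁻¹ * Real.exp (-α * u) * z)) ∂ρ))) :
    ρ = Measure.map
        (fun q : (Fin b → ℝ) × (Fin b → ℝ) => ∑ i, Real.exp (α * q.1 i - α ^ 2) * q.2 i)
        ((Measure.pi fun _ : Fin b => gaussianReal 0 1).prod
          (Measure.pi fun _ : Fin b => ρ)) := by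
  have := hprob
  have : NeZero b := ⟨by omega⟩
  have hα0 : 0 < α := hα ▸ Real.sqrt_pos.2 (mul_pos two_pos (Real.log_pos (by norm_cast)))
  have hρ : ∀ᵐ z ∂ρ, 0 ≤ z :=
    (measure_eq_zero_iff_ae_notMem.1 hpos).mono fun z hz => (not_le.1 hz).le
  set γ := Measure.pi fun _ : Fin b => gaussianReal 0 1
  have hφ : Continuous fun u => laplaceTransform ρ (α⁻¹ * Real.exp (-α * u)) :=
    (continuousOn_laplaceTransform ρ hρ).comp_continuous (by fun_prop)
      fun u => mem_Ici.2 (by positivity)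
  have hfix := fixedPoint_of_tendsto_cdf γ (μ := μM)
    (fun n x => by rw [hrec n, cdf_map_iSup_add]) hm hφ
    fun u => by simp_rw [cdf_eq_real, measureReal_def]; exact hconv u
  have hg : Measurable fun x => Real.exp (α * x - α ^ 2) := by fun_prop
  have hg0 : ∀ x, 0 ≤ Real.exp (α * x - α ^ 2) := fun x => (Real.exp_pos _).le
  have : IsProbabilityMeasure ((γ.prod (Measure.pi fun _ : Fin b => ρ)).map
      fun q => ∑ i, Real.exp (α * q.1 i - α ^ 2) * q.2 i) :=
    Measure.isProbabilityMeasure_map (by fun_prop)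
  refine Measure.ext_of_laplaceTransform_eq hρ (ae_nonneg_map_sum_mul γ hρ hg hg0)
    fun t ht => ?_
  rw [laplaceTransform_map_sum_mul γ hρ hg hg0 ht.le]
  exact smoothing_fixedPoint_of_shift_fixedPoint γ hα0 hfix ht
end
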